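/- arXiv:2407.18582 — 18 statements merged into one kernel-verified Lean document; each statement's English description precedes it below -/
import Mathlib

section
/- Let X be a nonempty complete lattice and let F : X → 2^X be a V-ascending correspondence such that for every x ∈ X the value F(x) is nonempty, chain-complete downwards (every nonempty chain in F(x) has a greatest lower bound belonging to F(x)) and chain-bounded above (every nonempty chain in F(x) has an upper bound lying in F(x)). Then the set Fix(F) = {x ∈ X | x ∈ F(x)} is nonempty and, with the order induced from X, is a complete lattice. -/
/-- `T` is a complete lattice in the order induced from `X`: every subset of `T` has a
least upper bound and a greatest lower bound within `T`. -/
def IsCompleteLatticeIn {X : Type*} [PartialOrder X] (T : Set X) : Prop :=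
  ∀ S : Set X, S ⊆ T →
    (∃ a ∈ T, (∀ s ∈ S, s ≤ a) ∧ ∀ b ∈ T, (∀ s ∈ S, s ≤ b) → a ≤ b) ∧
    (∃ a ∈ T, (∀ s ∈ S, a ≤ s) ∧ ∀ b ∈ T, (∀ s ∈ S, b ≤ s) → b ≤ a)

private lemma zornUp {α : Type*} [PartialOrder α] (s : Set α)
    (ih : ∀ c ⊆ s, IsChain (· ≤ ·) c → c.Nonempty → ∃ ub ∈ s, ∀ z ∈ c, z ≤ ub)
    (x : α) (hx : x ∈ s) : ∃ m ∈ s, x ≤ m ∧ ∀ z ∈ s, m ≤ z → z = m := by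
  obtain ⟨m, hxm, hmax⟩ := zorn_le_nonempty₀ s
    (fun c hcs hc y hy => ih c hcs hc ⟨y, hy⟩) x hx
  exact ⟨m, hmax.1, hxm, fun z hz hmz => le_antisymm (hmax.2 hz hmz) hmz⟩

private lemma zornDown {α : Type*} [PartialOrder α] (s : Set α)
    (ih : ∀ c ⊆ s, IsChain (· ≤ ·) c → c.Nonempty → ∃ lb ∈ s, ∀ z ∈ c, lb ≤ z)
    (x : α) (hx : x ∈ s) : ∃ m ∈ s, m ≤ x ∧ ∀ z ∈ s, z ≤ m → z = m :=
  zornUp (α := αᵒᵈ) s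
    (fun c hcs hc hne => ih c hcs (fun _ hp _ hq hpq => (hc hp hq hpq).symm) hne) x hx

/-- If `sSup S ≤ x` where `S` consists of fixed points, then `F x` contains an element
above `sSup S` (a maximal element of `F x` works). -/
private lemma exists_ge_in_value {X : Type*} [CompleteLattice X] (F : X → Set X)
    (hupp : ∀ x x' : X, x < x' → ∀ y ∈ F x, ∀ y' ∈ F x', y ⊔ y' ∈ F x')
    (hne : ∀ x : X, (F x).Nonempty)
    (hcba : ∀ x : X, ∀ C ⊆ F x, C.Nonempty → IsChain (· ≤ ·) C →
      ∃ u ∈ F x, ∀ c ∈ C, c ≤ u)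
    (S : Set X) (hS : ∀ s ∈ S, s ∈ F s) (x : X) (hax : sSup S ≤ x) :
    ∃ y ∈ F x, sSup S ≤ y := by
  by_cases hx : ∃ s ∈ S, s = x
  · obtain ⟨s, hsS, rfl⟩ := hx
    exact ⟨s, hS s hsS, hax⟩
  · obtain ⟨y0, hy0⟩ := hne x
    obtain ⟨y, hyF, -, hymax⟩ := zornUp (F x)
      (fun c hcs hc hcne => hcba x c hcs hcne hc) y0 hy0
    refine ⟨y, hyF, sSup_le fun s hsS => ?_⟩
    have hsx : s < x :=
      lt_of_le_of_ne (le_trans (le_sSup hsS) hax) (fun h => hx ⟨s, hsS, h⟩)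
    have h1 : s ⊔ y ∈ F x := hupp s x hsx s (hS s hsS) y hyF
    have h2 := hymax _ h1 le_sup_right
    calc s ≤ s ⊔ y := le_sup_left
    _ = y := h2

/-- Descending from a pre-fixed point: if `y ∈ F x`, `y ≤ x`, `sSup S ≤ y`, there is a
fixed point `t` with `sSup S ≤ t ≤ x`. -/
private lemma exists_fixed_le {X : Type*} [CompleteLattice X] (F : X → Set X)
    (hlow : ∀ x x' : X, x < x' → ∀ y ∈ F x, ∀ y' ∈ F x', y ⊓ y' ∈ F x)
    (hupp : ∀ x x' : X, x < x' → ∀ y ∈ F x, ∀ y' ∈ F x', y ⊔ y' ∈ F x')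
    (hne : ∀ x : X, (F x).Nonempty)
    (hccd : ∀ x : X, ∀ C ⊆ F x, C.Nonempty → IsChain (· ≤ ·) C →
      ∃ m ∈ F x, (∀ c ∈ C, m ≤ c) ∧ ∀ b ∈ F x, (∀ c ∈ C, b ≤ c) → b ≤ m)
    (hcba : ∀ x : X, ∀ C ⊆ F x, C.Nonempty → IsChain (· ≤ ·) C →
      ∃ u ∈ F x, ∀ c ∈ C, c ≤ u)
    (S : Set X) (hS : ∀ s ∈ S, s ∈ F s)
    (x y : X) (hyF : y ∈ F x) (hyx : y ≤ x) (hay : sSup S ≤ y) :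
    ∃ t, t ∈ F t ∧ sSup S ≤ t ∧ t ≤ x := by
  set a := sSup S with ha
  set D : Set (X × X) := {p | p.2 ∈ F p.1 ∧ p.2 ≤ p.1 ∧ a ≤ p.2} with hD
  have hxyD : (x, y) ∈ D := ⟨hyF, hyx, hay⟩
  have hchains : ∀ c ⊆ D, IsChain (· ≤ ·) c → c.Nonempty →
      ∃ lb ∈ D, ∀ z ∈ c, lb ≤ z := by
    intro c hcD hchain hcne
    obtain ⟨p0, hp0⟩ := hcne
    set x' : X := sInf (Prod.fst '' c) with hx'
    have hx'le : ∀ p ∈ c, x' ≤ p.1 := fun p hp => sInf_le ⟨p, hp, rfl⟩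
    have hax' : a ≤ x' := le_sInf (by
      rintro _ ⟨p, hp, rfl⟩
      exact le_trans (hcD hp).2.2 (hcD hp).2.1)
    -- `hma : a ≤ m` will be proven uniformly below using this absorption fact
    have habs : ∀ m ∈ F x', (∀ s ∈ S, s < x' → s ⊔ m ∈ F x') := by
      intro m hm s hsS hslt
      exact hupp s x' hslt s (hS s hsS) m hm
    by_cases hattain : ∃ p ∈ c, p.1 = x'
    · obtain ⟨q0, hq0c, hq0⟩ := hattain
      set Y : Set X := Prod.snd '' {q ∈ c | q.1 = x'} with hY
      have hYF : Y ⊆ F x' := by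
        rintro _ ⟨q, ⟨hqc, hq1⟩, rfl⟩
        exact hq1 ▸ (hcD hqc).1
      have hYne : Y.Nonempty := ⟨q0.2, q0, ⟨hq0c, hq0⟩, rfl⟩
      have hYchain : IsChain (· ≤ ·) Y := by
        rintro _ ⟨q, ⟨hqc, -⟩, rfl⟩ _ ⟨q', ⟨hq'c, -⟩, rfl⟩ hne'
        have hqq' : q ≠ q' := fun h => hne' (by rw [h])
        rcases hchain hqc hq'c hqq' with h | h
        · exact Or.inl h.2
        · exact Or.inr h.2
      obtain ⟨m, hmF, hmlb, hmglb⟩ := hccd x' Y hYF hYne hYchain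
      have hmY : ∀ q ∈ c, m ≤ q.2 := by
        intro q hqc
        by_cases hq1 : q.1 = x'
        · exact hmlb q.2 ⟨q, ⟨hqc, hq1⟩, rfl⟩
        · have hqne : q ≠ q0 := fun h => hq1 (h ▸ hq0)
          rcases hchain hqc hq0c hqne with h | h
          · exact absurd (le_antisymm (hq0 ▸ h.1) (hx'le q hqc)) hq1
          · exact le_trans (hmlb q0.2 ⟨q0, ⟨hq0c, hq0⟩, rfl⟩) h.2
      have hmx' : m ≤ x' := le_trans (hmY q0 hq0c) (le_trans (hcD hq0c).2.1 hq0.le)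
      have hma : a ≤ m := by
        by_cases hsx : ∃ s ∈ S, s = x'
        · obtain ⟨s, hsS, hseq⟩ := hsx
          have hax : a = x' := le_antisymm hax' (hseq ▸ le_sSup hsS)
          have hx'F : x' ∈ F x' := by rw [← hseq]; exact hseq ▸ hS s hsS
          refine hax ▸ hmglb x' hx'F (by
            rintro _ ⟨q, ⟨hqc, -⟩, rfl⟩
            exact hax ▸ (hcD hqc).2.2)
        · refine le_trans (le_of_eq ha) (sSup_le fun s hsS => ?_)
          have hslt : s < x' :=
            lt_of_le_of_ne (le_trans (le_sSup hsS) hax') (fun h => hsx ⟨s, hsS, h⟩)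
          have h1 : s ⊔ m ∈ F x' := habs m hmF s hsS hslt
          have h2 : s ⊔ m ≤ m := hmglb _ h1 (by
            rintro _ ⟨q, ⟨hqc, hq1⟩, rfl⟩
            exact sup_le (le_trans (le_sSup hsS) (hcD hqc).2.2)
              (hmlb q.2 ⟨q, ⟨hqc, hq1⟩, rfl⟩))
          exact le_trans le_sup_left h2
      exact ⟨(x', m), ⟨hmF, hmx', hma⟩, fun q hqc =>
        Prod.mk_le_mk.2 ⟨hx'le q hqc, hmY q hqc⟩⟩
    · push_neg at hattain
      have hlt : ∀ p ∈ c, x' < p.1 :=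
        fun p hp => lt_of_le_of_ne (hx'le p hp) (fun h => hattain p hp h.symm)
      obtain ⟨z, hzF, haz⟩ : ∃ z ∈ F x', a ≤ z := by
        by_cases hsx : ∃ s ∈ S, s = x'
        · obtain ⟨s, hsS, hseq⟩ := hsx
          have hx'F : x' ∈ F x' := by rw [← hseq]; exact hseq ▸ hS s hsS
          exact ⟨x', hx'F, hax'⟩
        · obtain ⟨y0, hy0⟩ := hne x'
          obtain ⟨z, hzF, -, hzmax⟩ := zornUp (F x')
            (fun cc hccs hcc hccne => hcba x' cc hccs hccne hcc) y0 hy0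
          refine ⟨z, hzF, le_trans (le_of_eq ha) (sSup_le fun s hsS => ?_)⟩
          have hslt : s < x' :=
            lt_of_le_of_ne (le_trans (le_sSup hsS) hax') (fun h => hsx ⟨s, hsS, h⟩)
          have h1 : s ⊔ z ∈ F x' := hupp s x' hslt s (hS s hsS) z hzF
          have h2 := hzmax _ h1 le_sup_right
          exact h2 ▸ le_sup_left
      set C : Set X := (fun p : X × X => z ⊓ p.2) '' c with hC
      have hCF : C ⊆ F x' := by
        rintro _ ⟨p, hp, rfl⟩
        exact hlow x' p.1 (hlt p hp) z hzF p.2 (hcD hp).1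
      have hCne : C.Nonempty := ⟨z ⊓ p0.2, p0, hp0, rfl⟩
      have hCchain : IsChain (· ≤ ·) C := by
        rintro _ ⟨p, hp, rfl⟩ _ ⟨q, hq, rfl⟩ hne'
        have hpq : p ≠ q := fun h => hne' (by rw [h])
        rcases hchain hp hq hpq with h | h
        · exact Or.inl (inf_le_inf_left z h.2)
        · exact Or.inr (inf_le_inf_left z h.2)
      obtain ⟨m, hmF, hmlb, hmglb⟩ := hccd x' C hCF hCne hCchain
      have hmp2 : ∀ p ∈ c, m ≤ p.2 :=
        fun p hp => le_trans (hmlb _ ⟨p, hp, rfl⟩) inf_le_right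
      have hmx' : m ≤ x' :=
        le_sInf (by rintro _ ⟨p, hp, rfl⟩; exact le_trans (hmp2 p hp) (hcD hp).2.1)
      have hma : a ≤ m := by
        refine le_trans (le_of_eq ha) (sSup_le fun s hsS => ?_)
        by_cases hsx' : s = x'
        · -- then s = a = x' and s ∈ F x' is a lower bound of C
          have hax : a = x' := le_antisymm hax' (hsx' ▸ le_sSup hsS)
          have hx'F : x' ∈ F x' := by rw [← hsx']; exact hsx' ▸ hS s hsS
          refine le_trans hsx'.le (hmglb x' hx'F (by
            rintro _ ⟨p, hp, rfl⟩
            exact le_inf (hax ▸ haz) (hax ▸ (hcD hp).2.2)))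
        · have hslt : s < x' := lt_of_le_of_ne (le_trans (le_sSup hsS) hax') hsx'
          have h1 : s ⊔ m ∈ F x' := habs m hmF s hsS hslt
          have h2 : s ⊔ m ≤ m := hmglb _ h1 (by
            rintro _ ⟨p, hp, rfl⟩
            exact sup_le (le_inf (le_trans (le_sSup hsS) haz)
              (le_trans (le_sSup hsS) (hcD hp).2.2)) (hmlb _ ⟨p, hp, rfl⟩))
          exact le_trans le_sup_left h2
      exact ⟨(x', m), ⟨hmF, hmx', hma⟩, fun q hqc =>
        Prod.mk_le_mk.2 ⟨hx'le q hqc, hmp2 q hqc⟩⟩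
  obtain ⟨⟨xb, yb⟩, hbD, hble, hbmin⟩ := zornDown D hchains (x, y) hxyD
  obtain ⟨hybF, hyxb, hayb⟩ := hbD
  by_cases hfix : yb = xb
  · exact ⟨xb, hfix ▸ hybF, le_trans hayb hyxb, hble.1⟩
  · exfalso
    have hlt : yb < xb := lt_of_le_of_ne hyxb hfix
    obtain ⟨z, hzF, haz⟩ : ∃ z ∈ F yb, a ≤ z := by
      by_cases hsx : ∃ s ∈ S, s = yb
      · obtain ⟨s, hsS, rfl⟩ := hsx
        exact ⟨s, hS s hsS, hayb⟩
      · obtain ⟨y0, hy0⟩ := hne yb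
        obtain ⟨z, hzF, -, hzmax⟩ := zornUp (F yb)
          (fun cc hccs hcc hccne => hcba yb cc hccs hccne hcc) y0 hy0
        refine ⟨z, hzF, le_trans (le_of_eq ha) (sSup_le fun s hsS => ?_)⟩
        have hslt : s < yb :=
          lt_of_le_of_ne (le_trans (le_sSup hsS) hayb) (fun h => hsx ⟨s, hsS, h⟩)
        have h1 : s ⊔ z ∈ F yb := hupp s yb hslt s (hS s hsS) z hzF
        have h2 := hzmax _ h1 le_sup_right
        exact h2 ▸ le_sup_left
    have hmem : z ⊓ yb ∈ F yb := hlow yb xb hlt z hzF yb hybF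
    have hnewD : ((yb, z ⊓ yb) : X × X) ∈ D := ⟨hmem, inf_le_right, le_inf haz hayb⟩
    have hle' : ((yb, z ⊓ yb) : X × X) ≤ (xb, yb) :=
      Prod.mk_le_mk.2 ⟨hyxb, inf_le_right⟩
    have := hbmin _ hnewD hle'
    exact hfix (congrArg Prod.fst this)

/-- There is a fixed point above `sSup S` when `S` consists of fixed points. -/
private lemma exists_fixed_ge {X : Type*} [CompleteLattice X] (F : X → Set X)
    (hupp : ∀ x x' : X, x < x' → ∀ y ∈ F x, ∀ y' ∈ F x', y ⊔ y' ∈ F x')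
    (hne : ∀ x : X, (F x).Nonempty)
    (hcba : ∀ x : X, ∀ C ⊆ F x, C.Nonempty → IsChain (· ≤ ·) C →
      ∃ u ∈ F x, ∀ c ∈ C, c ≤ u)
    (S : Set X) (hS : ∀ s ∈ S, s ∈ F s) :
    ∃ t, t ∈ F t ∧ sSup S ≤ t := by
  set a := sSup S with ha
  obtain ⟨y0, hy0F, hay0⟩ := exists_ge_in_value F hupp hne hcba S hS a le_rfl
  set D : Set (X × X) := {p | p.2 ∈ F p.1 ∧ p.1 ≤ p.2 ∧ a ≤ p.1} with hD
  have hstart : ((a, y0) : X × X) ∈ D := ⟨hy0F, hay0, le_rfl⟩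
  have hchains : ∀ c ⊆ D, IsChain (· ≤ ·) c → c.Nonempty →
      ∃ ub ∈ D, ∀ z ∈ c, z ≤ ub := by
    intro c hcD hchain hcne
    obtain ⟨p0, hp0⟩ := hcne
    set x' : X := sSup (Prod.fst '' c) with hx'
    have hx'ge : ∀ p ∈ c, p.1 ≤ x' := fun p hp => le_sSup ⟨p, hp, rfl⟩
    have hax' : a ≤ x' := le_trans (hcD hp0).2.2 (hx'ge p0 hp0)
    by_cases hattain : ∃ p ∈ c, p.1 = x'
    · obtain ⟨q0, hq0c, hq0⟩ := hattain
      set Y : Set X := Prod.snd '' {q ∈ c | q.1 = x'} with hY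
      have hYF : Y ⊆ F x' := by
        rintro _ ⟨q, ⟨hqc, hq1⟩, rfl⟩
        exact hq1 ▸ (hcD hqc).1
      have hYne : Y.Nonempty := ⟨q0.2, q0, ⟨hq0c, hq0⟩, rfl⟩
      have hYchain : IsChain (· ≤ ·) Y := by
        rintro _ ⟨q, ⟨hqc, -⟩, rfl⟩ _ ⟨q', ⟨hq'c, -⟩, rfl⟩ hne'
        have hqq' : q ≠ q' := fun h => hne' (by rw [h])
        rcases hchain hqc hq'c hqq' with h | h
        · exact Or.inl h.2
        · exact Or.inr h.2
      obtain ⟨u, huF, hub⟩ := hcba x' Y hYF hYne hYchain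
      have hqu : ∀ q ∈ c, q.2 ≤ u := by
        intro q hqc
        by_cases hq1 : q.1 = x'
        · exact hub q.2 ⟨q, ⟨hqc, hq1⟩, rfl⟩
        · have hqne : q ≠ q0 := fun h => hq1 (h ▸ hq0)
          rcases hchain hqc hq0c hqne with h | h
          · exact le_trans h.2 (hub q0.2 ⟨q0, ⟨hq0c, hq0⟩, rfl⟩)
          · exact absurd (le_antisymm (hx'ge q hqc) (hq0 ▸ h.1)) hq1
      have hx'u : x' ≤ u :=
        le_trans (le_of_eq hq0.symm) (le_trans (hcD hq0c).2.1 (hqu q0 hq0c))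
      exact ⟨(x', u), ⟨huF, hx'u, hax'⟩, fun q hqc =>
        Prod.mk_le_mk.2 ⟨hx'ge q hqc, hqu q hqc⟩⟩
    · push_neg at hattain
      have hlt : ∀ p ∈ c, p.1 < x' :=
        fun p hp => lt_of_le_of_ne (hx'ge p hp) (hattain p hp)
      obtain ⟨z, hzF⟩ := hne x'
      set C : Set X := (fun p : X × X => p.2 ⊔ z) '' c with hC
      have hCF : C ⊆ F x' := by
        rintro _ ⟨p, hp, rfl⟩
        exact hupp p.1 x' (hlt p hp) p.2 (hcD hp).1 z hzF
      have hCne : C.Nonempty := ⟨p0.2 ⊔ z, p0, hp0, rfl⟩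
      have hCchain : IsChain (· ≤ ·) C := by
        rintro _ ⟨p, hp, rfl⟩ _ ⟨q, hq, rfl⟩ hne'
        have hpq : p ≠ q := fun h => hne' (by rw [h])
        rcases hchain hp hq hpq with h | h
        · exact Or.inl (sup_le_sup_right h.2 z)
        · exact Or.inr (sup_le_sup_right h.2 z)
      obtain ⟨u, huF, hub⟩ := hcba x' C hCF hCne hCchain
      have hqu : ∀ q ∈ c, q.2 ≤ u :=
        fun q hq => le_trans le_sup_left (hub _ ⟨q, hq, rfl⟩)
      have hx'u : x' ≤ u := sSup_le (by
        rintro _ ⟨p, hp, rfl⟩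
        exact le_trans (hcD hp).2.1 (hqu p hp))
      exact ⟨(x', u), ⟨huF, hx'u, hax'⟩, fun q hqc =>
        Prod.mk_le_mk.2 ⟨hx'ge q hqc, hqu q hqc⟩⟩
  obtain ⟨⟨xb, yb⟩, hbD, -, hbmax⟩ := zornUp D hchains (a, y0) hstart
  obtain ⟨hybF, hxyb, haxb⟩ := hbD
  by_cases hfix : xb = yb
  · exact ⟨xb, by rw [hfix] at hybF ⊢; exact hybF, haxb⟩
  · exfalso
    have hlt : xb < yb := lt_of_le_of_ne hxyb hfix
    obtain ⟨z, hzF⟩ := hne yb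
    have hmem : yb ⊔ z ∈ F yb := hupp xb yb hlt yb hybF z hzF
    have hnewD : ((yb, yb ⊔ z) : X × X) ∈ D :=
      ⟨hmem, le_sup_left, le_trans haxb hxyb⟩
    have hle' : ((xb, yb) : X × X) ≤ (yb, yb ⊔ z) :=
      Prod.mk_le_mk.2 ⟨hxyb, le_sup_left⟩
    have := hbmax _ hnewD hle'
    exact hfix (congrArg Prod.fst this).symm

/-- Key lemma: least fixed point above `sSup S`. -/
private lemma exists_least_fixed_ge {X : Type*} [CompleteLattice X] (F : X → Set X)
    (hlow : ∀ x x' : X, x < x' → ∀ y ∈ F x, ∀ y' ∈ F x', y ⊓ y' ∈ F x)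
    (hupp : ∀ x x' : X, x < x' → ∀ y ∈ F x, ∀ y' ∈ F x', y ⊔ y' ∈ F x')
    (hne : ∀ x : X, (F x).Nonempty)
    (hccd : ∀ x : X, ∀ C ⊆ F x, C.Nonempty → IsChain (· ≤ ·) C →
      ∃ m ∈ F x, (∀ c ∈ C, m ≤ c) ∧ ∀ b ∈ F x, (∀ c ∈ C, b ≤ c) → b ≤ m)
    (hcba : ∀ x : X, ∀ C ⊆ F x, C.Nonempty → IsChain (· ≤ ·) C →
      ∃ u ∈ F x, ∀ c ∈ C, c ≤ u)
    (S : Set X) (hS : ∀ s ∈ S, s ∈ F s) :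
    ∃ t, t ∈ F t ∧ sSup S ≤ t ∧ ∀ t', t' ∈ F t' → sSup S ≤ t' → t ≤ t' := by
  set a := sSup S with ha
  set FixA : Set X := {t | t ∈ F t ∧ a ≤ t} with hFixA
  have hFixAne : FixA.Nonempty := by
    obtain ⟨t, htF, hat⟩ := exists_fixed_ge F hupp hne hcba S hS
    exact ⟨t, htF, hat⟩
  set cc : X := sInf FixA with hcc
  have hacc : a ≤ cc := le_sInf fun t ht => ht.2
  by_cases hc : cc ∈ F cc
  · exact ⟨cc, hc, hacc, fun t' ht' hat' => sInf_le ⟨ht', hat'⟩⟩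
  · exfalso
    -- minimal element of G = {y ∈ F cc | a ≤ y}
    set G : Set X := {y | y ∈ F cc ∧ a ≤ y} with hG
    obtain ⟨y0, hy0F, hay0⟩ := exists_ge_in_value F hupp hne hcba S hS cc hacc
    have hGchains : ∀ C ⊆ G, IsChain (· ≤ ·) C → C.Nonempty →
        ∃ lb ∈ G, ∀ z ∈ C, lb ≤ z := by
      intro C hCG hchain hCne
      obtain ⟨m, hmF, hmlb, hmglb⟩ :=
        hccd cc C (fun y hy => (hCG hy).1) hCne hchain
      have ham : a ≤ m := by
        refine le_trans (le_of_eq ha) (sSup_le fun s hsS => ?_)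
        have hslt : s < cc := by
          refine lt_of_le_of_ne (le_trans (le_sSup hsS) hacc) (fun h => ?_)
          exact hc (h ▸ hS s hsS)
        have h1 : s ⊔ m ∈ F cc := hupp s cc hslt s (hS s hsS) m hmF
        have h2 : s ⊔ m ≤ m := hmglb _ h1 (fun y hy =>
          sup_le (le_trans (le_sSup hsS) (hCG hy).2) (hmlb y hy))
        exact le_trans le_sup_left h2
      exact ⟨m, ⟨hmF, ham⟩, hmlb⟩
    obtain ⟨y', hy'G, -, hy'min⟩ := zornDown G hGchains y0 ⟨hy0F, hay0⟩
    -- y' is below every element of FixA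
    have hy'lb : ∀ t ∈ FixA, y' ≤ t := by
      intro t ht
      have hct : cc < t :=
        lt_of_le_of_ne (sInf_le ht) (fun h => hc (h ▸ ht.1))
      have hmem : y' ⊓ t ∈ F cc := hlow cc t hct y' hy'G.1 t ht.1
      have hmemG : y' ⊓ t ∈ G := ⟨hmem, le_inf hy'G.2 ht.2⟩
      have := hy'min _ hmemG inf_le_left
      exact this ▸ inf_le_right
    have hy'cc : y' ≤ cc := le_sInf hy'lb
    obtain ⟨t, htF, hat, htcc⟩ :=
      exists_fixed_le F hlow hupp hne hccd hcba S hS cc y' hy'G.1 hy'cc hy'G.2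
    have : cc ≤ t := sInf_le ⟨htF, hat⟩
    exact hc ((le_antisymm htcc this) ▸ htF)

/-- Theorem 1.5 (main theorem): for a V-ascending correspondence on a complete lattice
whose values are nonempty, chain-complete downwards and chain-bounded above, the set of
fixed points is a nonempty complete lattice. -/
theorem fixedPoints_vAscending_complete_lattice
    {X : Type*} [CompleteLattice X] (F : X → Set X)
    (hlow : ∀ x x' : X, x < x' → ∀ y ∈ F x, ∀ y' ∈ F x', y ⊓ y' ∈ F x)
    (hupp : ∀ x x' : X, x < x' → ∀ y ∈ F x, ∀ y' ∈ F x', y ⊔ y' ∈ F x')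
    (hne : ∀ x : X, (F x).Nonempty)
    (hccd : ∀ x : X, ∀ C ⊆ F x, C.Nonempty → IsChain (· ≤ ·) C →
      ∃ m ∈ F x, (∀ c ∈ C, m ≤ c) ∧ ∀ b ∈ F x, (∀ c ∈ C, b ≤ c) → b ≤ m)
    (hcba : ∀ x : X, ∀ C ⊆ F x, C.Nonempty → IsChain (· ≤ ·) C →
      ∃ u ∈ F x, ∀ c ∈ C, c ≤ u) :
    {x : X | x ∈ F x}.Nonempty ∧ IsCompleteLatticeIn {x : X | x ∈ F x} := by
  constructor
  · obtain ⟨t, htF, -⟩ := exists_fixed_ge F hupp hne hcba ∅ (fun s hs => hs.elim)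
    exact ⟨t, htF⟩
  · intro S hS
    constructor
    · obtain ⟨c, hcF, hac, hleast⟩ :=
        exists_least_fixed_ge F hlow hupp hne hccd hcba S (fun s hs => hS hs)
      exact ⟨c, hcF, fun s hs => le_trans (le_sSup hs) hac,
        fun b hb hub => hleast b hb (sSup_le hub)⟩
    · set S₂ : Set X := {b | b ∈ F b ∧ ∀ s ∈ S, b ≤ s} with hS₂def
      obtain ⟨d, hdF, had, hdleast⟩ :=
        exists_least_fixed_ge F hlow hupp hne hccd hcba S₂ (fun b hb => hb.1)
      refine ⟨d, hdF, fun s hsS => hdleast s (hS hsS)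
        (sSup_le fun b hb => hb.2 s hsS), fun b hbF hblb => ?_⟩
      exact le_trans (le_sSup (show b ∈ S₂ from ⟨hbF, hblb⟩)) had
end

section
/- Let X be a nonempty complete lattice and let F : X → 2^X be a correspondence such that: (a) for every x ∈ X the value F(x) is nonempty and chain-subcomplete downwards in X (for every nonempty chain C ⊆ F(x), the infimum inf_X C belongs to F(x)); (b) for every x ∈ X the set F(x) is chain-bounded above (every nonempty chain in F(x) has an upper bound lying in F(x)); (c) F is lower V-ascending and upper C-ascending. Then Fix(F) = {x ∈ X | x ∈ F(x)} is nonempty and, with the order induced from X, is a complete lattice. -/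
section Aux

variable {X : Type*} [CompleteLattice X] (F : X → Set X)

/-- A nonempty subset in which every nonempty chain has a lower bound within the set
has a minimal element. -/
private lemma exists_minimal_mem {Y : Type*} [PartialOrder Y] (s : Set Y) (hs : s.Nonempty)
    (h : ∀ c ⊆ s, IsChain (· ≤ ·) c → c.Nonempty → ∃ lb ∈ s, ∀ z ∈ c, lb ≤ z) :
    ∃ m, m ∈ s ∧ ∀ z ∈ s, z ≤ m → m ≤ z := by
  obtain ⟨x0, hx0⟩ := hs
  obtain ⟨m, -, hm⟩ := zorn_le_nonempty₀ (α := Yᵒᵈ) (OrderDual.ofDual ⁻¹' s)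
    (fun c hc hchain y0 hy0 => by
      obtain ⟨lb, hlbs, hlb⟩ := h (OrderDual.ofDual '' c)
        (by rintro _ ⟨z, hz, rfl⟩; exact hc hz)
        (by rintro _ ⟨p, hp, rfl⟩ _ ⟨q, hq, rfl⟩ hpq
            exact (hchain hp hq (fun hh => hpq (congrArg _ hh))).symm)
        ⟨OrderDual.ofDual y0, y0, hy0, rfl⟩
      exact ⟨OrderDual.toDual lb, hlbs, fun z hz => hlb _ ⟨z, hz, rfl⟩⟩)
    (OrderDual.toDual x0) hx0
  exact ⟨OrderDual.ofDual m, hm.1,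
    fun z hz hzm => hm.2 (show OrderDual.toDual z ∈ _ from hz) hzm⟩

/-- Every value `F x` has a maximal element, if values are nonempty and chain-bounded above. -/
private lemma exists_maximal_mem
    (hne : ∀ x : X, (F x).Nonempty)
    (hcba : ∀ x : X, ∀ C ⊆ F x, C.Nonempty → IsChain (· ≤ ·) C →
      ∃ u ∈ F x, ∀ c ∈ C, c ≤ u) (x : X) :
    ∃ y, Maximal (· ∈ F x) y := by
  obtain ⟨y0, hy0⟩ := hne x
  obtain ⟨m, -, hm⟩ := zorn_le_nonempty₀ (F x)
    (fun c hc hchain y hy => hcba x c hc ⟨y, hy⟩ hchain) y0 hy0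
  exact ⟨m, hm⟩

/-- A maximal element of `F x` dominates every element of `F s` for `s < x`,
when `F` is upper C-ascending. -/
private lemma maximal_dominates
    (huppC : ∀ x x' : X, x < x' → ∀ y ∈ F x, ∀ y' ∈ F x',
      ∃ u ∈ F x', y ≤ u ∧ y' ≤ u)
    {x y : X} (hy : Maximal (· ∈ F x) y) {s z : X} (hs : s < x) (hz : z ∈ F s) :
    z ≤ y := by
  obtain ⟨u, hu, hzu, hyu⟩ := huppC s x hs z hz y hy.1
  exact hzu.trans (hy.2 hu hyu)

/-- Key lemma: the least fixed point above a set of fixed points exists. -/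
private lemma key
    (hne : ∀ x : X, (F x).Nonempty)
    (hsubd : ∀ x : X, ∀ C ⊆ F x, C.Nonempty → IsChain (· ≤ ·) C → sInf C ∈ F x)
    (hcba : ∀ x : X, ∀ C ⊆ F x, C.Nonempty → IsChain (· ≤ ·) C →
      ∃ u ∈ F x, ∀ c ∈ C, c ≤ u)
    (hlowV : ∀ x x' : X, x < x' → ∀ y ∈ F x, ∀ y' ∈ F x', y ⊓ y' ∈ F x)
    (huppC : ∀ x x' : X, x < x' → ∀ y ∈ F x, ∀ y' ∈ F x',
      ∃ u ∈ F x', y ≤ u ∧ y' ≤ u)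
    (S : Set X) (hS : ∀ s ∈ S, s ∈ F s) :
    ∃ a, a ∈ F a ∧ (∀ s ∈ S, s ≤ a) ∧ ∀ z, z ∈ F z → (∀ s ∈ S, s ≤ z) → a ≤ z := by
  set b : X := sSup S with hb
  -- the set of "pre-fixed" points above `b` with witness above `b`
  set D : Set X := {x : X | b ≤ x ∧ ∃ y ∈ F x, b ≤ y ∧ y ≤ x} with hD
  -- every fixed point above all of S lies in D
  have hfixD : ∀ z, z ∈ F z → (∀ s ∈ S, s ≤ z) → z ∈ D := by
    intro z hz hzS
    exact ⟨sSup_le hzS, z, hz, sSup_le hzS, le_rfl⟩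
  -- ⊤ ∈ D
  have htop : (⊤ : X) ∈ D := by
    by_cases h : ∃ s ∈ S, s = ⊤
    · obtain ⟨s, hsS, rfl⟩ := h
      exact hfixD _ (hS _ hsS) (fun t _ => le_top)
    · obtain ⟨y, hy⟩ := exists_maximal_mem F hne hcba ⊤
      refine ⟨le_top, y, hy.1, sSup_le fun s hsS => ?_, le_top⟩
      have hlt : s < ⊤ := lt_of_le_of_ne le_top (fun hc => h ⟨s, hsS, hc⟩)
      exact maximal_dominates F huppC hy hlt (hS _ hsS)
  have hDne : D.Nonempty := ⟨⊤, htop⟩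
  set a : X := sInf D with ha
  have hba : b ≤ a := le_sInf fun x hx => hx.1
  -- a ∈ D
  have haD : a ∈ D := by
    by_contra haD
    have hlt : ∀ x ∈ D, a < x := fun x hx =>
      lt_of_le_of_ne (sInf_le hx) (fun hc => haD (hc ▸ hx))
    -- all elements of S are < a (else a itself is a fixed point in D)
    have hSlt : ∀ s ∈ S, s < a := by
      intro s hsS
      refine lt_of_le_of_ne ((le_sSup hsS).trans hba) (fun hc => ?_)
      exact haD (hfixD a (hc ▸ hS s hsS) (fun t htS => (le_sSup htS).trans hba))
    -- a maximal element of F a is ≥ b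
    obtain ⟨y, hy⟩ := exists_maximal_mem F hne hcba a
    have hby : b ≤ y := sSup_le fun s hsS =>
      maximal_dominates F huppC hy (hSlt s hsS) (hS s hsS)
    -- find a minimal element of F a ∩ Ici b
    obtain ⟨m, ⟨hmF, hmb⟩, hmmin⟩ := exists_minimal_mem (F a ∩ Set.Ici b) ⟨y, hy.1, hby⟩
      (fun c hc hchain hcne => by
        refine ⟨sInf c, ⟨hsubd a c (fun z hz => (hc hz).1) hcne hchain,
          le_sInf fun z hz => (hc hz).2⟩, fun z hz => sInf_le hz⟩)
    -- minimality: m ≤ every witness of every x ∈ D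
    have hmx : ∀ x ∈ D, m ≤ x := by
      rintro x ⟨hbx, w, hwF, hbw, hwx⟩
      have hmem : (m ⊓ w : X) ∈ F a ∩ Set.Ici b :=
        ⟨hlowV a x (hlt x ⟨hbx, w, hwF, hbw, hwx⟩) m hmF w hwF,
         le_inf hmb hbw⟩
      have : m ≤ m ⊓ w := hmmin (m ⊓ w) hmem inf_le_left
      exact (this.trans inf_le_right).trans hwx
    exact haD ⟨hba, m, hmF, hmb, le_sInf hmx⟩
  -- a is a fixed point
  obtain ⟨-, y, hyF, hby, hya⟩ := haD
  have hafix : a ∈ F a := by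
    rcases eq_or_lt_of_le hya with rfl | hlt
    · exact hyF
    · exfalso
      -- show y ∈ D, contradicting a = sInf D > y
      have hSlt : ∀ s ∈ S, s < y := by
        intro s hsS
        refine lt_of_le_of_ne ((le_sSup hsS).trans hby) (fun hc => ?_)
        have : y ∈ D := hfixD y (hc ▸ hS s hsS)
          (fun t htS => (le_sSup htS).trans hby)
        exact absurd (sInf_le this) (not_le_of_gt hlt)
      obtain ⟨z, hz⟩ := exists_maximal_mem F hne hcba y
      have hbz : b ≤ z := sSup_le fun s hsS =>
        maximal_dominates F huppC hz (hSlt s hsS) (hS s hsS)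
      have hmem : (z ⊓ y : X) ∈ F y := hlowV y a hlt z hz.1 y hyF
      have : y ∈ D := ⟨hby, z ⊓ y, hmem, le_inf hbz hby, inf_le_right⟩
      exact absurd (sInf_le this) (not_le_of_gt hlt)
  exact ⟨a, hafix, fun s hsS => (le_sSup hsS).trans hba,
    fun z hz hzS => sInf_le (hfixD z hz hzS)⟩

end Aux

/-- Theorem 2.6 (first version): if `F` has nonempty values which are chain-subcomplete
downwards in `X` and chain-bounded above, and `F` is lower V-ascending and upper
C-ascending, then `Fix(F)` is a nonempty complete lattice. -/
theorem fixedPoints_lowerV_upperC_complete_lattice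
    {X : Type*} [CompleteLattice X] (F : X → Set X)
    (hne : ∀ x : X, (F x).Nonempty)
    (hsubd : ∀ x : X, ∀ C ⊆ F x, C.Nonempty → IsChain (· ≤ ·) C → sInf C ∈ F x)
    (hcba : ∀ x : X, ∀ C ⊆ F x, C.Nonempty → IsChain (· ≤ ·) C →
      ∃ u ∈ F x, ∀ c ∈ C, c ≤ u)
    (hlowV : ∀ x x' : X, x < x' → ∀ y ∈ F x, ∀ y' ∈ F x', y ⊓ y' ∈ F x)
    (huppC : ∀ x x' : X, x < x' → ∀ y ∈ F x, ∀ y' ∈ F x',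
      ∃ u ∈ F x', y ≤ u ∧ y' ≤ u) :
    {x : X | x ∈ F x}.Nonempty ∧ IsCompleteLatticeIn {x : X | x ∈ F x} := by
  have key' := key F hne hsubd hcba hlowV huppC
  constructor
  · obtain ⟨a, ha, -, -⟩ := key' ∅ (by simp)
    exact ⟨a, ha⟩
  · intro S hST
    constructor
    · obtain ⟨a, ha, h1, h2⟩ := key' S hST
      exact ⟨a, ha, h1, fun z hz hzS => h2 z hz hzS⟩
    · -- infimum: sup of the set of lower bounds in T
      obtain ⟨a, ha, h1, h2⟩ := key' {t | t ∈ F t ∧ ∀ s ∈ S, t ≤ s}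
        (fun t ht => ht.1)
      refine ⟨a, ha, fun s hsS => h2 s (hST hsS) (fun l hl => hl.2 s hsS), ?_⟩
      intro z hz hzS
      exact h1 z ⟨hz, hzS⟩
end

section
/- Let X be a nonempty complete lattice and let F : X → 2^X be a correspondence such that: (a) for every x ∈ X the value F(x) is nonempty and chain-subcomplete upwards in X (for every nonempty chain C ⊆ F(x), the supremum sup_X C belongs to F(x)); (b) for every x ∈ X the set F(x) is chain-bounded below (every nonempty chain in F(x) has a lower bound lying in F(x)); (c) F is upper V-ascending and lower C-ascending. Then Fix(F) = {x ∈ X | x ∈ F(x)} is nonempty and, with the order induced from X, is a complete lattice. -/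
section Aux

variable {X : Type*} [CompleteLattice X]

/-- Zorn: a nonempty set closed under suprema of nonempty chains has a maximal element. -/
private lemma exists_maximal_aux (A : Set X) (hA : A.Nonempty)
    (hsub : ∀ C ⊆ A, C.Nonempty → IsChain (· ≤ ·) C → sSup C ∈ A) :
    ∃ m ∈ A, ∀ z ∈ A, m ≤ z → z = m := by
  obtain ⟨a, ha⟩ := hA
  obtain ⟨m, -, hm, hmax⟩ := zorn_le_nonempty₀ A
    (fun c hc hchain y hy => ⟨sSup c, hsub c hc ⟨y, hy⟩ hchain, fun z hz => le_sSup hz⟩) a ha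
  exact ⟨m, hm, fun z hz hmz => le_antisymm (hmax hz hmz) hmz⟩

/-- Dual Zorn: a nonempty set in which every nonempty chain has a lower bound
within the set has a minimal element. -/
private lemma exists_minimal_aux (A : Set X) (hA : A.Nonempty)
    (hlb : ∀ C ⊆ A, C.Nonempty → IsChain (· ≤ ·) C → ∃ l ∈ A, ∀ c ∈ C, l ≤ c) :
    ∃ m ∈ A, ∀ z ∈ A, z ≤ m → z = m := by
  obtain ⟨a, ha⟩ := hA
  obtain ⟨m, -, hm, hmax⟩ := zorn_le_nonempty₀ (α := Xᵒᵈ) (OrderDual.ofDual ⁻¹' A)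
    (fun c hc hchain y hy => by
      obtain ⟨l, hl, hlc⟩ := hlb (OrderDual.ofDual '' c)
        (by rintro _ ⟨z, hz, rfl⟩; exact hc hz)
        ⟨OrderDual.ofDual y, ⟨y, hy, rfl⟩⟩
        (by
          rintro _ ⟨p, hpc, rfl⟩ _ ⟨q, hqc, rfl⟩ hpq
          rcases hchain hpc hqc (fun h => hpq (congrArg _ h)) with h | h
          · exact Or.inr h
          · exact Or.inl h)
      exact ⟨OrderDual.toDual l, hl, fun z hz => hlc _ ⟨z, hz, rfl⟩⟩)
    (OrderDual.toDual a) ha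
  exact ⟨m, hm, fun z hz hzm => le_antisymm hzm (hmax hz hzm)⟩

/-- Lifting lemma: a nonempty chain-subcomplete set closed under joins with elements
of `S` contains an element above `sSup S`. -/
private lemma lift_aux (S : Set X) (G : Set X) (hGne : G.Nonempty)
    (hGsub : ∀ C ⊆ G, C.Nonempty → IsChain (· ≤ ·) C → sSup C ∈ G)
    (hGjoin : ∀ s ∈ S, ∀ z ∈ G, s ⊔ z ∈ G) :
    ∃ m ∈ G, sSup S ≤ m := by
  obtain ⟨m, hm, hmax⟩ := exists_maximal_aux G hGne hGsub
  refine ⟨m, hm, sSup_le fun s hs => ?_⟩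
  have h := hmax _ (hGjoin s hs m hm) le_sup_right
  calc s ≤ s ⊔ m := le_sup_left
    _ = m := h

/-- Key lemma: if `b = sSup S` for a set `S` of fixed points with `b` itself not a fixed
point, and `D` is a set of fixed points above `b`, then there is a fixed point above `b`
and below all of `D`. -/
private lemma key_aux (F : X → Set X)
    (hne : ∀ x : X, (F x).Nonempty)
    (hsubu : ∀ x : X, ∀ C ⊆ F x, C.Nonempty → IsChain (· ≤ ·) C → sSup C ∈ F x)
    (hcbb : ∀ x : X, ∀ C ⊆ F x, C.Nonempty → IsChain (· ≤ ·) C →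
      ∃ l ∈ F x, ∀ c ∈ C, l ≤ c)
    (huppV : ∀ x x' : X, x < x' → ∀ y ∈ F x, ∀ y' ∈ F x', y ⊔ y' ∈ F x')
    (hlowC : ∀ x x' : X, x < x' → ∀ y ∈ F x, ∀ y' ∈ F x',
      ∃ v ∈ F x, v ≤ y ∧ v ≤ y')
    (S : Set X) (hS : ∀ s ∈ S, s ∈ F s) (hb : sSup S ∉ F (sSup S))
    (D : Set X) (hD : ∀ d ∈ D, sSup S ≤ d ∧ d ∈ F d) :
    ∃ x₀, x₀ ∈ F x₀ ∧ sSup S ≤ x₀ ∧ ∀ d ∈ D, x₀ ≤ d := by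
  set b := sSup S with hbdef
  -- any element of S is strictly below any x ≥ b
  have hslt : ∀ s ∈ S, ∀ x : X, b ≤ x → s < x := by
    intro s hs x hx
    have hsb : s ≤ b := le_sSup hs
    refine lt_of_le_of_ne (hsb.trans hx) ?_
    rintro rfl
    have hbs : b = s := le_antisymm hx hsb
    exact hb (hbs ▸ hS s hs)
  -- joins with elements of S stay in F x when b ≤ x
  have hjoinF : ∀ x : X, b ≤ x → ∀ s ∈ S, ∀ z ∈ F x, s ⊔ z ∈ F x := fun x hx s hs z hz =>
    huppV s x (hslt s hs x hx) s (hS s hs) z hz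
  -- minimal element of {z ∈ F x | b ≤ z}
  have hZmin : ∀ x : X, b ≤ x → ∃ μ, (μ ∈ F x ∧ b ≤ μ) ∧
      ∀ z ∈ F x, b ≤ z → z ≤ μ → z = μ := by
    intro x hx
    obtain ⟨m0, hm0F, hm0b⟩ := lift_aux S (F x) (hne x) (hsubu x) (hjoinF x hx)
    have hZlb : ∀ C ⊆ {z | z ∈ F x ∧ b ≤ z}, C.Nonempty → IsChain (· ≤ ·) C →
        ∃ l ∈ {z | z ∈ F x ∧ b ≤ z}, ∀ c ∈ C, l ≤ c := by
      intro C hC hCne hCchain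
      obtain ⟨l, hlF, hlc⟩ := hcbb x C (fun c hc => (hC hc).1) hCne hCchain
      obtain ⟨m, ⟨hmF, hmlb⟩, hmb⟩ := lift_aux S {w | w ∈ F x ∧ ∀ c ∈ C, w ≤ c}
        ⟨l, hlF, hlc⟩
        (fun C' hC' hC'ne hC'chain =>
          ⟨hsubu x C' (fun z hz => (hC' hz).1) hC'ne hC'chain,
            fun c hc => sSup_le fun z hz => (hC' hz).2 c hc⟩)
        (fun s hs z hz => ⟨hjoinF x hx s hs z hz.1,
          fun c hc => sup_le ((le_sSup hs).trans (hC hc).2) (hz.2 c hc)⟩)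
      exact ⟨m, ⟨hmF, hmb⟩, hmlb⟩
    obtain ⟨μ, hμZ, hμmin⟩ := exists_minimal_aux {z | z ∈ F x ∧ b ≤ z}
      ⟨m0, hm0F, hm0b⟩ hZlb
    exact ⟨μ, hμZ, fun z hzF hzb hzμ => hμmin z ⟨hzF, hzb⟩ hzμ⟩
  -- the minimal element is below any b-above element of F x' for x < x'
  have hminle : ∀ x x' : X, b ≤ x → x < x' → ∀ μ, (μ ∈ F x ∧ b ≤ μ) →
      (∀ z ∈ F x, b ≤ z → z ≤ μ → z = μ) → ∀ w ∈ F x', b ≤ w → μ ≤ w := by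
    intro x x' hx hxx' μ hμ hμmin w hwF hwb
    obtain ⟨hμF, hμb⟩ := hμ
    obtain ⟨v, hvF, hvμ, hvw⟩ := hlowC x x' hxx' μ hμF w hwF
    obtain ⟨m, ⟨hmF, hmμ, hmw⟩, hmb⟩ := lift_aux S {v' | v' ∈ F x ∧ v' ≤ μ ∧ v' ≤ w}
      ⟨v, hvF, hvμ, hvw⟩
      (fun C hC hCne hCchain =>
        ⟨hsubu x C (fun z hz => (hC hz).1) hCne hCchain,
          sSup_le fun z hz => (hC hz).2.1, sSup_le fun z hz => (hC hz).2.2⟩)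
      (fun s hs z hz => ⟨hjoinF x hx s hs z hz.1,
        sup_le ((le_sSup hs).trans hμb) hz.2.1, sup_le ((le_sSup hs).trans hwb) hz.2.2⟩)
    have heq := hμmin m hmF hmb hmμ
    exact heq ▸ hmw
  -- the set of post-fixed points above b and below D
  set T : Set X := {x | b ≤ x ∧ (∀ d ∈ D, x ≤ d) ∧ ∃ y ∈ F x, b ≤ y ∧ y ≤ x} with hTdef
  have hbi : b ≤ sInf D := le_sInf fun d hd => (hD d hd).1
  have hiT : sInf D ∈ T := by
    refine ⟨hbi, fun d hd => sInf_le hd, ?_⟩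
    by_cases hif : sInf D ∈ F (sInf D)
    · exact ⟨sInf D, hif, hbi, le_rfl⟩
    · obtain ⟨μ, ⟨hμF, hμb⟩, hμmin⟩ := hZmin (sInf D) hbi
      refine ⟨μ, hμF, hμb, le_sInf fun d hd => ?_⟩
      have hlt : sInf D < d := lt_of_le_of_ne (sInf_le hd)
        (by intro h; rw [h] at hif; exact hif (hD d hd).2)
      exact hminle _ _ hbi hlt μ ⟨hμF, hμb⟩ hμmin d (hD d hd).2 (hD d hd).1
  have hTlb : ∀ C ⊆ T, C.Nonempty → IsChain (· ≤ ·) C → ∃ l ∈ T, ∀ c ∈ C, l ≤ c := by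
    intro C hC hCne hCchain
    by_cases hjC : sInf C ∈ C
    · exact ⟨sInf C, hC hjC, fun c hc => sInf_le hc⟩
    · have hbj : b ≤ sInf C := le_sInf fun c hc => (hC hc).1
      have hlt : ∀ c ∈ C, sInf C < c := fun c hc =>
        lt_of_le_of_ne (sInf_le hc) (by intro h; rw [h] at hjC; exact hjC hc)
      obtain ⟨c0, hc0⟩ := hCne
      have hjd : ∀ d ∈ D, sInf C ≤ d := fun d hd => (sInf_le hc0).trans ((hC hc0).2.1 d hd)
      obtain ⟨μ, ⟨hμF, hμb⟩, hμmin⟩ := hZmin (sInf C) hbj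
      have hμc : ∀ c ∈ C, μ ≤ c := by
        intro c hc
        obtain ⟨y, hyF, hyb, hyc⟩ := (hC hc).2.2
        exact (hminle _ _ hbj (hlt c hc) μ ⟨hμF, hμb⟩ hμmin y hyF hyb).trans hyc
      exact ⟨sInf C, ⟨hbj, hjd, μ, hμF, hμb, le_sInf hμc⟩, fun c hc => sInf_le hc⟩
  obtain ⟨x₀, hx₀T, hx₀min⟩ := exists_minimal_aux T ⟨_, hiT⟩ hTlb
  obtain ⟨hbx₀, hx₀d, y, hyF, hyb, hyx₀⟩ := hx₀T
  rcases eq_or_lt_of_le hyx₀ with rfl | hylt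
  · exact ⟨y, hyF, hyb, hx₀d⟩
  · exfalso
    have hyT : y ∈ T := by
      by_cases hyf : y ∈ F y
      · exact ⟨hyb, fun d hd => hylt.le.trans (hx₀d d hd), y, hyf, hyb, le_rfl⟩
      · obtain ⟨μ, ⟨hμF, hμb⟩, hμmin⟩ := hZmin y hyb
        exact ⟨hyb, fun d hd => hylt.le.trans (hx₀d d hd), μ, hμF, hμb,
          hminle y x₀ hyb hylt μ ⟨hμF, hμb⟩ hμmin y hyF hyb⟩
    exact hylt.ne (hx₀min y hyT hylt.le)

end Aux

/-- Theorem 2.6 (dual version): if `F` has nonempty values which are chain-subcomplete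
upwards in `X` and chain-bounded below, and `F` is upper V-ascending and lower
C-ascending, then `Fix(F)` is a nonempty complete lattice. -/
theorem fixedPoints_upperV_lowerC_complete_lattice
    {X : Type*} [CompleteLattice X] (F : X → Set X)
    (hne : ∀ x : X, (F x).Nonempty)
    (hsubu : ∀ x : X, ∀ C ⊆ F x, C.Nonempty → IsChain (· ≤ ·) C → sSup C ∈ F x)
    (hcbb : ∀ x : X, ∀ C ⊆ F x, C.Nonempty → IsChain (· ≤ ·) C →
      ∃ l ∈ F x, ∀ c ∈ C, l ≤ c)
    (huppV : ∀ x x' : X, x < x' → ∀ y ∈ F x, ∀ y' ∈ F x', y ⊔ y' ∈ F x')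
    (hlowC : ∀ x x' : X, x < x' → ∀ y ∈ F x, ∀ y' ∈ F x',
      ∃ v ∈ F x, v ≤ y ∧ v ≤ y') :
    {x : X | x ∈ F x}.Nonempty ∧ IsCompleteLatticeIn {x : X | x ∈ F x} := by
  have lub : ∀ S : Set X, S ⊆ {x : X | x ∈ F x} →
      ∃ a ∈ {x : X | x ∈ F x}, (∀ s ∈ S, s ≤ a) ∧
        ∀ c ∈ {x : X | x ∈ F x}, (∀ s ∈ S, s ≤ c) → a ≤ c := by
    intro S hSsub
    by_cases hb : sSup S ∈ F (sSup S)
    · exact ⟨sSup S, hb, fun s hs => le_sSup hs, fun c _ hcub => sSup_le hcub⟩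
    · obtain ⟨x₀, hx₀F, hbx₀, hx₀min⟩ := key_aux F hne hsubu hcbb huppV hlowC S
        (fun s hs => hSsub hs) hb {x | sSup S ≤ x ∧ x ∈ F x} (fun d hd => hd)
      exact ⟨x₀, hx₀F, fun s hs => (le_sSup hs).trans hbx₀,
        fun c hcF hcub => hx₀min c ⟨sSup_le hcub, hcF⟩⟩
  constructor
  · obtain ⟨a, ha, -⟩ := lub ∅ (by simp)
    exact ⟨a, ha⟩
  · intro S hSsub
    refine ⟨lub S hSsub, ?_⟩
    obtain ⟨a, haF, haub, hamin⟩ := lub {t ∈ {x : X | x ∈ F x} | ∀ s ∈ S, t ≤ s}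
      (fun t ht => ht.1)
    exact ⟨a, haF, fun s hs => hamin s (hSsub hs) (fun l hl => hl.2 s hs),
      fun b' hb' hblb => haub b' ⟨hb', hblb⟩⟩
end

section
/- Let X be a nonempty complete lattice and let F : X → 2^X be a correspondence with nonempty values such that: (1) for every x ∈ X the value F(x) has a greatest element; (2) F is upper increasing; (3) F is strongly lower increasing; (4) for every h ∈ A_F and every x ∈ [h, 1] (where 1 = max X), the set F^h(x) := F(x) ∩ [h, ∞) has a least element whenever it is nonempty. Then Fix(F) = {x ∈ X | x ∈ F(x)} is nonempty and, with the order induced from X, is a complete lattice. -/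
/-- Calciano's theorem: under conditions (1)-(4), `Fix(F)` is a nonempty complete
lattice. -/
theorem calciano_fixedPoints_complete_lattice
    {X : Type*} [CompleteLattice X] (F : X → Set X)
    (hne : ∀ x : X, (F x).Nonempty)
    (hmax : ∀ x : X, ∃ g, IsGreatest (F x) g)
    (huppinc : ∀ x x' : X, x ≤ x' → ∀ y ∈ F x, ∃ y' ∈ F x', y ≤ y')
    (hstrlow : ∀ x x' : X, x ≤ x' → ∀ y ∈ F x, ∀ y' ∈ F x',
      ∃ p ∈ F x, y ⊓ y' ≤ p ∧ p ≤ y')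
    (hhmin : ∀ h : X, (∃ y ∈ F h, h ≤ y) → ∀ x : X, h ≤ x →
      (F x ∩ Set.Ici h).Nonempty → ∃ m, IsLeast (F x ∩ Set.Ici h) m) :
    {x : X | x ∈ F x}.Nonempty ∧ IsCompleteLatticeIn {x : X | x ∈ F x} := by
  classical
  -- Key lemma: for every `h ∈ A_F` there is a least fixed point of `F` above `h`.
  have key : ∀ h : X, (∃ y ∈ F h, h ≤ y) →
      ∃ a, a ∈ F a ∧ h ≤ a ∧ ∀ b, b ∈ F b → h ≤ b → a ≤ b := by
    rintro h ⟨y, hyF, hhy⟩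
    have hFne : ∀ x : X, h ≤ x → (F x ∩ Set.Ici h).Nonempty := by
      intro x hx
      obtain ⟨y', hy'F, hyy'⟩ := huppinc h x hx y hyF
      exact ⟨y', hy'F, le_trans hhy hyy'⟩
    have hm : ∀ x : X, h ≤ x → ∃ m, IsLeast (F x ∩ Set.Ici h) m := fun x hx =>
      hhmin h ⟨y, hyF, hhy⟩ x hx (hFne x hx)
    let m : X → X := fun x => if hx : h ≤ x then (hm x hx).choose else x
    have hmspec : ∀ (x : X), h ≤ x → IsLeast (F x ∩ Set.Ici h) (m x) := by
      intro x hx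
      simp only [m, dif_pos hx]
      exact (hm x hx).choose_spec
    have hmono : ∀ x x' : X, h ≤ x → x ≤ x' → m x ≤ m x' := by
      intro x x' hx hxx'
      have hx' := le_trans hx hxx'
      have h1 := hmspec x hx
      have h2 := hmspec x' hx'
      obtain ⟨p, hpF, hlep, hple⟩ := hstrlow x x' hxx' (m x) h1.1.1 (m x') h2.1.1
      have hhp : h ≤ p := le_trans (le_inf h1.1.2 h2.1.2) hlep
      exact le_trans (h1.2 ⟨hpF, hhp⟩) hple
    set D := {x : X | h ≤ x ∧ m x ≤ x} with hD
    set a := sInf D with ha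
    have hha : h ≤ a := le_sInf fun x hx => hx.1
    have hma : m a ≤ a := by
      apply le_sInf
      intro x hx
      exact le_trans (hmono a x hha (sInf_le hx)) hx.2
    have ham : a ≤ m a := by
      apply sInf_le
      refine ⟨(hmspec a hha).1.2, ?_⟩
      exact hmono (m a) a (hmspec a hha).1.2 hma
    have haeq : a = m a := le_antisymm ham hma
    refine ⟨a, ?_, hha, ?_⟩
    · have := (hmspec a hha).1.1
      rwa [← haeq] at this
    · intro b hbF hhb
      exact sInf_le ⟨hhb, (hmspec b hhb).2 ⟨hbF, hhb⟩⟩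
  have lub : ∀ S : Set X, S ⊆ {x : X | x ∈ F x} →
      ∃ a ∈ {x : X | x ∈ F x}, (∀ s ∈ S, s ≤ a) ∧
        ∀ b ∈ {x : X | x ∈ F x}, (∀ s ∈ S, s ≤ b) → a ≤ b := by
    intro S hS
    set h := sSup S with hh
    obtain ⟨g, hgF, hg⟩ := hmax h
    have hhg : h ≤ g := by
      apply sSup_le
      intro s hs
      obtain ⟨y', hy'F, hsy'⟩ := huppinc s h (le_sSup hs) s (hS hs)
      exact le_trans hsy' (hg hy'F)
    obtain ⟨a, haF, hha, hleast⟩ := key h ⟨g, hgF, hhg⟩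
    exact ⟨a, haF, fun s hs => le_trans (le_sSup hs) hha,
      fun b hbF hb => hleast b hbF (sSup_le hb)⟩
  constructor
  · obtain ⟨y, hy⟩ := hne ⊥
    obtain ⟨a, haF, -, -⟩ := key ⊥ ⟨y, hy, bot_le⟩
    exact ⟨a, haF⟩
  · intro S hS
    refine ⟨lub S hS, ?_⟩
    set L := {t ∈ {x : X | x ∈ F x} | ∀ s ∈ S, t ≤ s} with hL
    obtain ⟨a, haF, hub, hlub⟩ := lub L (fun t ht => ht.1)
    refine ⟨a, haF, ?_, ?_⟩
    · intro s hs
      exact hlub s (hS hs) (fun t ht => ht.2 s hs)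
    · intro b hbF hb
      exact hub b ⟨hbF, hb⟩
end

section
/- Let X be a nonempty complete lattice and let F : X → 2^X be a correspondence with nonempty values such that: (I) for every x ∈ X, max F(x) exists and the map x ↦ max F(x) from X to X is increasing; (II) for every h ∈ A_F and every x ∈ X with x ≥ h, the set F^h(x) := F(x) ∩ [h, ∞) has a least element, and the map x ↦ min F^h(x) from [h, 1] to [h, 1] is increasing (where 1 = max X). Then Fix(F) = {x ∈ X | x ∈ F(x)} is nonempty and, with the order induced from X, is a complete lattice. -/
/-- Sabarwal's theorem: if `max F(x)` exists for every `x` and depends increasingly on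
`x`, and for every `h ∈ A_F` the least element of `F^h(x)` exists for all `x ≥ h` and
depends increasingly on `x`, then `Fix(F)` is a nonempty complete lattice. -/
theorem sabarwal_fixedPoints_complete_lattice
    {X : Type*} [CompleteLattice X] (F : X → Set X)
    (hne : ∀ x : X, (F x).Nonempty)
    (hmax : ∀ x : X, ∃ g, IsGreatest (F x) g)
    (hmaxinc : ∀ x x' : X, x ≤ x' → ∀ g g' : X,
      IsGreatest (F x) g → IsGreatest (F x') g' → g ≤ g')
    (hmin : ∀ h : X, (∃ y ∈ F h, h ≤ y) → ∀ x : X, h ≤ x →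
      ∃ m, IsLeast (F x ∩ Set.Ici h) m)
    (hmininc : ∀ h : X, (∃ y ∈ F h, h ≤ y) → ∀ x x' : X, h ≤ x → x ≤ x' →
      ∀ m m' : X, IsLeast (F x ∩ Set.Ici h) m → IsLeast (F x' ∩ Set.Ici h) m' →
        m ≤ m') :
    {x : X | x ∈ F x}.Nonempty ∧ IsCompleteLatticeIn {x : X | x ∈ F x} := by
  set T : Set X := {x : X | x ∈ F x} with hT
  -- Key: every subset of `T` has a least upper bound within `T`.
  have key : ∀ S : Set X, S ⊆ T →
      ∃ a ∈ T, (∀ s ∈ S, s ≤ a) ∧ ∀ b ∈ T, (∀ s ∈ S, s ≤ b) → a ≤ b := by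
    intro S hS
    classical
    set h := sSup S with hh
    -- h ∈ A_F
    have hA : ∃ y ∈ F h, h ≤ y := by
      obtain ⟨gh, hgh⟩ := hmax h
      refine ⟨gh, hgh.1, ?_⟩
      refine sSup_le fun s hs => ?_
      obtain ⟨gs, hgs⟩ := hmax s
      exact le_trans (hgs.2 (hS hs)) (hmaxinc s h (le_sSup hs) gs gh hgs hgh)
    -- the selection m x = min (F x ∩ [h,∞))
    have m : ∀ x : X, h ≤ x → {y : X // IsLeast (F x ∩ Set.Ici h) y} := by
      intro x hx
      exact ⟨(hmin h hA x hx).choose, (hmin h hA x hx).choose_spec⟩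
    let mf : X → X := fun x => if hx : h ≤ x then (m x hx).1 else h
    have hmf : ∀ x (hx : h ≤ x), IsLeast (F x ∩ Set.Ici h) (mf x) := by
      intro x hx
      simp only [mf, dif_pos hx]
      exact (m x hx).2
    have hmono : ∀ x x', h ≤ x → x ≤ x' → mf x ≤ mf x' := by
      intro x x' hx hxx'
      exact hmininc h hA x x' hx hxx' _ _ (hmf x hx) (hmf x' (hx.trans hxx'))
    set P : Set X := {x : X | h ≤ x ∧ mf x ≤ x} with hP
    set a := sInf P with ha
    have hha : h ≤ a := le_sInf fun x hx => hx.1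
    have hmaa : mf a ≤ a := le_sInf fun x hx =>
      le_trans (hmono a x hha (sInf_le hx)) hx.2
    have hhma : h ≤ mf a := (hmf a hha).1.2
    have haP : mf a ∈ P := ⟨hhma, hmono (mf a) a hhma hmaa⟩
    have haeq : a = mf a := le_antisymm (sInf_le haP) hmaa
    refine ⟨a, ?_, fun s hs => le_trans (le_sSup hs) hha, ?_⟩
    · show a ∈ F a
      have := (hmf a hha).1.1
      rwa [← haeq] at this
    · intro b hb hub
      have hhb : h ≤ b := sSup_le hub
      exact sInf_le ⟨hhb, (hmf b hhb).2 ⟨hb, hhb⟩⟩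
  obtain ⟨a0, ha0, -⟩ := key ∅ (Set.empty_subset _)
  refine ⟨⟨a0, ha0⟩, fun S hS => ⟨key S hS, ?_⟩⟩
  -- infimum: sup of the set of lower bounds
  set L : Set X := {x : X | x ∈ T ∧ ∀ s ∈ S, x ≤ s} with hL
  obtain ⟨a, haT, hub, hlub⟩ := key L (fun x hx => hx.1)
  refine ⟨a, haT, fun s hs => hlub s (hS hs) (fun u hu => hu.2 s hs), ?_⟩
  intro b hb hlb
  exact hub b ⟨hb, hlb⟩
end

section
/- Let X be a nonempty poset and let F, M : X → 2^X be correspondences such that: (A) for every x ∈ X, F(x) is nonempty and M(x) ⊆ F(x); (B) for every x ∈ X and every y ∈ F(x), there exists z ∈ M(x) with y ≤ z; (C) for all x < x' in X, every y ∈ M(x) and every y' ∈ M(x'), one has y ≤ y'; (D) the set A_F := {x ∈ X | ∃ y ∈ F(x), x ≤ y} is nonempty; (E) the supremum x* := sup_X A_F exists in X. Then x* is the largest fixed point of F, i.e., x* ∈ F(x*) and z ≤ x* for every z ∈ X with z ∈ F(z). -/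
/-- Theorem 3.1: under assumptions (A)-(E), `x* = sup A_F` is the largest fixed point
of `F`. -/
theorem sup_AF_is_largest_fixed_point
    {X : Type*} [PartialOrder X] [Nonempty X] (F M : X → Set X)
    (hA : ∀ x : X, (F x).Nonempty ∧ M x ⊆ F x)
    (hB : ∀ x : X, ∀ y ∈ F x, ∃ z ∈ M x, y ≤ z)
    (hC : ∀ x x' : X, x < x' → ∀ y ∈ M x, ∀ y' ∈ M x', y ≤ y')
    (hD : {x : X | ∃ y ∈ F x, x ≤ y}.Nonempty)
    (xstar : X) (hE : IsLUB {x : X | ∃ y ∈ F x, x ≤ y} xstar) :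
    xstar ∈ F xstar ∧ ∀ z : X, z ∈ F z → z ≤ xstar := by
  set A := {x : X | ∃ y ∈ F x, x ≤ y} with hAdef
  -- pick z ∈ M x*
  obtain ⟨y0, hy0⟩ := (hA xstar).1
  obtain ⟨z0, hz0M, _⟩ := hB xstar y0 hy0
  -- Step 1: x* ∈ A
  have hxA : xstar ∈ A := by
    by_contra hnot
    -- every a ∈ A satisfies a < x*, then a ≤ z0
    have hub : z0 ∈ upperBounds A := by
      intro a ha
      have halt : a < xstar := lt_of_le_of_ne (hE.1 ha) (fun h => hnot (h ▸ ha))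
      obtain ⟨y, hyF, hay⟩ := ha
      obtain ⟨m, hmM, hym⟩ := hB a y hyF
      exact le_trans (le_trans hay hym) (hC a xstar halt m hmM z0 hz0M)
    have hxz : xstar ≤ z0 := hE.2 hub
    exact hnot ⟨z0, (hA xstar).2 hz0M, hxz⟩
  -- Step 2: x* ∈ F x*
  obtain ⟨y, hyF, hxy⟩ := hxA
  obtain ⟨m, hmM, hym⟩ := hB xstar y hyF
  have hxm : xstar ≤ m := le_trans hxy hym
  have hmx : m ≤ xstar := by
    rcases eq_or_lt_of_le hxm with h | h
    · exact h.ge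
    · -- x* < m : show m ∈ A, so m ≤ x*, contradiction
      obtain ⟨y', hy'F⟩ := (hA m).1
      obtain ⟨m', hm'M, _⟩ := hB m y' hy'F
      have hmm' : m ≤ m' := hC xstar m h m hmM m' hm'M
      exact hE.1 ⟨m', (hA m).2 hm'M, hmm'⟩
  have : xstar = m := le_antisymm hxm hmx
  constructor
  · exact this ▸ (hA xstar).2 hmM
  · intro z hz
    exact hE.1 ⟨z, hz, le_refl z⟩
end

section
/- Let X be a nonempty poset and let F, M : X → 2^X be correspondences such that: (A) for every x ∈ X, F(x) is nonempty and M(x) ⊆ F(x); (B) for every x ∈ X and every y ∈ F(x), there exists z ∈ M(x) with z ≤ y; (C) for all x < x' in X, every y ∈ M(x) and every y' ∈ M(x'), one has y ≤ y'; (D) the set B_F := {x ∈ X | ∃ y ∈ F(x), y ≤ x} is nonempty; (E) the infimum x_* := inf_X B_F exists in X. Then x_* is the least fixed point of F, i.e., x_* ∈ F(x_*) and x_* ≤ z for every z ∈ X with z ∈ F(z). -/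
/-- Theorem 3.1 (dual version): under assumptions (A)-(E), `x_* = inf B_F` is the least
fixed point of `F`. -/
theorem inf_BF_is_least_fixed_point
    {X : Type*} [PartialOrder X] [Nonempty X] (F M : X → Set X)
    (hA : ∀ x : X, (F x).Nonempty ∧ M x ⊆ F x)
    (hB : ∀ x : X, ∀ y ∈ F x, ∃ z ∈ M x, z ≤ y)
    (hC : ∀ x x' : X, x < x' → ∀ y ∈ M x, ∀ y' ∈ M x', y ≤ y')
    (hD : {x : X | ∃ y ∈ F x, y ≤ x}.Nonempty)
    (xstar : X) (hE : IsGLB {x : X | ∃ y ∈ F x, y ≤ x} xstar) :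
    xstar ∈ F xstar ∧ ∀ z : X, z ∈ F z → xstar ≤ z := by
  set B := {x : X | ∃ y ∈ F x, y ≤ x} with hBdef
  -- pick z0 ∈ M xstar
  obtain ⟨y0, hy0⟩ := (hA xstar).1
  obtain ⟨z0, hz0M, _⟩ := hB xstar y0 hy0
  -- Step 1: xstar ∈ B
  have hxB : xstar ∈ B := by
    by_cases hmem : ∃ b ∈ B, xstar = b
    · obtain ⟨b, hb, rfl⟩ := hmem; exact hb
    · push_neg at hmem
      -- z0 is a lower bound of B
      have hlb : z0 ∈ lowerBounds B := by
        intro b hb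
        have hlt : xstar < b := lt_of_le_of_ne (hE.1 hb) (hmem b hb)
        obtain ⟨y, hyF, hyb⟩ := hb
        obtain ⟨w, hwM, hwy⟩ := hB b y hyF
        exact le_trans (hC xstar b hlt z0 hz0M w hwM) (le_trans hwy hyb)
      have hzx : z0 ≤ xstar := hE.2 hlb
      exact ⟨z0, (hA xstar).2 hz0M, hzx⟩
  -- Step 2: the witness in M xstar below xstar equals xstar
  obtain ⟨y, hyF, hyx⟩ := hxB
  obtain ⟨z, hzM, hzy⟩ := hB xstar y hyF
  have hzx : z ≤ xstar := le_trans hzy hyx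
  have hz_eq : z = xstar := by
    rcases eq_or_lt_of_le hzx with h | hlt
    · exact h
    · exfalso
      obtain ⟨v, hvF⟩ := (hA z).1
      obtain ⟨w, hwM, _⟩ := hB z v hvF
      have hwz : w ≤ z := hC z xstar hlt w hwM z hzM
      have hzB : z ∈ B := ⟨w, (hA z).2 hwM, hwz⟩
      exact absurd (hE.1 hzB) (not_le_of_gt hlt)
  constructor
  · have hzF : z ∈ F xstar := (hA xstar).2 hzM
    rwa [hz_eq] at hzF
  · intro t htF
    exact hE.1 ⟨t, htF, le_refl t⟩
end

section
/- Let X be a nonempty poset and let M : X → 2^X be a correspondence with nonempty values such that for all x < x' in X, every y ∈ M(x) and every y' ∈ M(x'), one has y ≤ y'. Let S be a nonempty subset of A_M := {x ∈ X | ∃ y ∈ M(x), x ≤ y}. If z = sup_X S exists, then z ∈ A_M. -/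
/-- Lemma 3.2: if `M` has nonempty values and satisfies the strong monotonicity
condition, then the supremum of any nonempty subset of `A_M` belongs to `A_M`. -/
theorem sup_mem_AM
    {X : Type*} [PartialOrder X] [Nonempty X] (M : X → Set X)
    (hne : ∀ x : X, (M x).Nonempty)
    (hinc : ∀ x x' : X, x < x' → ∀ y ∈ M x, ∀ y' ∈ M x', y ≤ y')
    (S : Set X) (hS : S.Nonempty) (hSA : S ⊆ {x : X | ∃ y ∈ M x, x ≤ y})
    (z : X) (hz : IsLUB S z) :
    z ∈ {x : X | ∃ y ∈ M x, x ≤ y} := by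
  by_cases hzS : z ∈ S
  · exact hSA hzS
  · obtain ⟨y, hy⟩ := hne z
    refine ⟨y, hy, hz.2 ?_⟩
    intro x hx
    obtain ⟨w, hw, hxw⟩ := hSA hx
    have hxz : x < z := lt_of_le_of_ne (hz.1 hx) (fun h => hzS (h ▸ hx))
    exact hxw.trans (hinc x z hxz w hw y hy)
end

section
/- Let X be a nonempty poset and let F : X → 2^X be an upper increasing correspondence such that: (1) for every x ∈ X, F(x) is nonempty and has a greatest element; (2) the set A_F := {x ∈ X | ∃ y ∈ F(x), x ≤ y} is nonempty; (3) x* := sup_X A_F exists in X. Then x* is the largest fixed point of F, i.e., x* ∈ F(x*) and z ≤ x* for every z ∈ X with z ∈ F(z). -/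
/-- Corollary 3.3 (Calciano): for an upper increasing correspondence with nonempty
values having greatest elements, `x* = sup A_F` is the largest fixed point of `F`. -/
theorem calciano_largest_fixed_point
    {X : Type*} [PartialOrder X] [Nonempty X] (F : X → Set X)
    (huppinc : ∀ x x' : X, x ≤ x' → ∀ y ∈ F x, ∃ y' ∈ F x', y ≤ y')
    (h1 : ∀ x : X, (F x).Nonempty ∧ ∃ g, IsGreatest (F x) g)
    (h2 : {x : X | ∃ y ∈ F x, x ≤ y}.Nonempty)
    (xstar : X) (h3 : IsLUB {x : X | ∃ y ∈ F x, x ≤ y} xstar) :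
    xstar ∈ F xstar ∧ ∀ z : X, z ∈ F z → z ≤ xstar := by
  obtain ⟨-, g, hgF, hgmax⟩ := h1 xstar
  -- g is an upper bound of A
  have hub : ∀ x ∈ {x : X | ∃ y ∈ F x, x ≤ y}, x ≤ g := by
    rintro x ⟨y, hyF, hxy⟩
    obtain ⟨y', hy'F, hyy'⟩ := huppinc x xstar (h3.1 ⟨y, hyF, hxy⟩) y hyF
    exact hxy.trans (hyy'.trans (hgmax hy'F))
  have hxg : xstar ≤ g := h3.2 hub
  -- g ∈ A, so g ≤ xstar, hence g = xstar
  obtain ⟨g', hg'F, hgg'⟩ := huppinc xstar g hxg g hgF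
  have hgx : g ≤ xstar := h3.1 ⟨g', hg'F, hgg'⟩
  have : g = xstar := le_antisymm hgx hxg
  exact ⟨this ▸ hgF, fun z hz => h3.1 ⟨z, hz, le_refl z⟩⟩
end

section
/- Let X be a nonempty complete lattice and let F : X → 2^X be an upper C-ascending correspondence such that for every x ∈ X the value F(x) is nonempty and chain-bounded above (every nonempty chain in F(x) has an upper bound lying in F(x)). Then F has a largest fixed point, namely sup_X A_F where A_F := {x ∈ X | ∃ y ∈ F(x), x ≤ y}; that is, x* := sup_X A_F satisfies x* ∈ F(x*) and z ≤ x* for every z with z ∈ F(z). -/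
/-- Lemma 3.4: an upper C-ascending correspondence on a complete lattice, with nonempty
chain-bounded-above values, has a largest fixed point, namely `sup A_F`. -/
theorem upperC_largest_fixed_point
    {X : Type*} [CompleteLattice X] (F : X → Set X)
    (huppC : ∀ x x' : X, x < x' → ∀ y ∈ F x, ∀ y' ∈ F x',
      ∃ u ∈ F x', y ≤ u ∧ y' ≤ u)
    (hne : ∀ x : X, (F x).Nonempty)
    (hcba : ∀ x : X, ∀ C ⊆ F x, C.Nonempty → IsChain (· ≤ ·) C →
      ∃ u ∈ F x, ∀ c ∈ C, c ≤ u) :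
    sSup {x : X | ∃ y ∈ F x, x ≤ y} ∈ F (sSup {x : X | ∃ y ∈ F x, x ≤ y}) ∧
      ∀ z : X, z ∈ F z → z ≤ sSup {x : X | ∃ y ∈ F x, x ≤ y} := by
  set A := {x : X | ∃ y ∈ F x, x ≤ y} with hA
  set s := sSup A with hs
  have hzle : ∀ z : X, z ∈ F z → z ≤ s := fun z hz =>
    le_sSup ⟨z, hz, le_refl z⟩
  have hsA : s ∈ A := by
    by_contra h
    obtain ⟨y0, hy0⟩ := hne s
    obtain ⟨m, -, hmF, hmax⟩ := zorn_le_nonempty₀ (F s)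
      (fun c hc hchain z hz => hcba s c hc ⟨z, hz⟩ hchain) y0 hy0
    have hle : ∀ a ∈ A, a ≤ m := by
      intro a ha
      have halt : a < s := lt_of_le_of_ne (le_sSup ha) (fun e => h (e ▸ ha))
      obtain ⟨ya, hya, hay⟩ := ha
      obtain ⟨u, huF, hyu, hmu⟩ := huppC a s halt ya hya m hmF
      have hum : u = m := le_antisymm (hmax huF hmu) hmu
      exact hay.trans (hum ▸ hyu)
    exact h ⟨m, hmF, sSup_le hle⟩
  obtain ⟨y, hyF, hsy⟩ := hsA
  rcases eq_or_lt_of_le hsy with he | hlt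
  · exact ⟨he ▸ hyF, hzle⟩
  · exfalso
    obtain ⟨y', hy'⟩ := hne y
    obtain ⟨u, huF, hyu, -⟩ := huppC s y hlt y hyF y' hy'
    exact hlt.not_ge (le_sSup (show y ∈ A from ⟨u, huF, hyu⟩))
end

section
/- Let X be a nonempty complete lattice and let F : X → 2^X be a lower C-ascending correspondence such that for every x ∈ X the value F(x) is nonempty and chain-bounded below (every nonempty chain in F(x) has a lower bound lying in F(x)). Then F has a least fixed point, namely inf_X B_F where B_F := {x ∈ X | ∃ y ∈ F(x), y ≤ x}; that is, x_* := inf_X B_F satisfies x_* ∈ F(x_*) and x_* ≤ z for every z with z ∈ F(z). -/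
/-- Lemma 3.4 (dual version): a lower C-ascending correspondence on a complete lattice,
with nonempty chain-bounded-below values, has a least fixed point, namely `inf B_F`. -/
theorem lowerC_least_fixed_point
    {X : Type*} [CompleteLattice X] (F : X → Set X)
    (hlowC : ∀ x x' : X, x < x' → ∀ y ∈ F x, ∀ y' ∈ F x',
      ∃ v ∈ F x, v ≤ y ∧ v ≤ y')
    (hne : ∀ x : X, (F x).Nonempty)
    (hcbb : ∀ x : X, ∀ C ⊆ F x, C.Nonempty → IsChain (· ≤ ·) C →
      ∃ l ∈ F x, ∀ c ∈ C, l ≤ c) :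
    sInf {x : X | ∃ y ∈ F x, y ≤ x} ∈ F (sInf {x : X | ∃ y ∈ F x, y ≤ x}) ∧
      ∀ z : X, z ∈ F z → sInf {x : X | ∃ y ∈ F x, y ≤ x} ≤ z := by
  set B : Set X := {x : X | ∃ y ∈ F x, y ≤ x} with hBdef
  set a : X := sInf B with hadef
  -- obtain a minimal element of F a via Zorn's lemma in the dual order
  obtain ⟨y₀, -, hy₀, hy₀min⟩ :=
    zorn_le_nonempty₀ (α := Xᵒᵈ) (F a)
      (fun c hc hchain y hy => by
        obtain ⟨l, hl, hlc⟩ := hcbb a c hc ⟨y, hy⟩ hchain.symm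
        exact ⟨l, hl, fun z hz => hlc z hz⟩)
      ((hne a).some) (hne a).some_mem
  -- y₀ : Xᵒᵈ, hy₀ : y₀ ∈ F a, hy₀min : ∀ z ∈ F a, z ≤ y₀ → y₀ ≤ z (in X)
  have hmin : ∀ z ∈ F a, z ≤ (OrderDual.ofDual y₀) → z = OrderDual.ofDual y₀ :=
    fun z hz hzle => le_antisymm hzle (hy₀min hz hzle)
  have haB : a ∈ B := by
    by_contra haB
    have hle : ∀ b ∈ B, OrderDual.ofDual y₀ ≤ b := by
      intro b hb
      obtain ⟨y, hy, hyb⟩ := id hb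
      have hab : a < b := lt_of_le_of_ne (sInf_le hb) (fun h => haB (h ▸ hb))
      obtain ⟨v, hv, hvy₀, hvy⟩ := hlowC a b hab (OrderDual.ofDual y₀) hy₀ y hy
      have hv0 : v = OrderDual.ofDual y₀ := hmin v hv hvy₀
      exact hv0 ▸ (hvy.trans hyb)
    exact haB ⟨OrderDual.ofDual y₀, hy₀, le_sInf hle⟩
  obtain ⟨y, hy, hya⟩ := haB
  have hya' : y = a := by
    by_contra hne'
    have hlt : y < a := lt_of_le_of_ne hya hne'
    obtain ⟨w, hw⟩ := hne y
    obtain ⟨v, hv, hvw, hvy⟩ := hlowC y a hlt w hw y hy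
    exact absurd (sInf_le (show y ∈ B from ⟨v, hv, hvy⟩)) (not_le_of_gt hlt)
  exact ⟨hya' ▸ hy, fun z hz => sInf_le ⟨z, hz, le_refl z⟩⟩
end

section
/- Let S be a poset and let P, Q be subsets of S. Assume that Q is chain-bounded below (every nonempty chain in Q has a lower bound lying in Q). Fix x ∈ P ∩ Q, and suppose that for every p ∈ P \ {x} and every q ∈ Q there exists q' ∈ Q with q' ≤ p and q' ≤ q. Then there exists q₀ ∈ Q such that q₀ ≤ p for all p ∈ P. -/
/-- Lemma 4.1: let `Q` be chain-bounded below, `x ∈ P ∩ Q`, and suppose for every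
`p ∈ P \ {x}` and `q ∈ Q` there is `q' ∈ Q` below both. Then some `q₀ ∈ Q` is a lower
bound on all of `P`. -/
theorem exists_lower_bound_of_chain_bounded_below
    {S : Type*} [PartialOrder S] (P Q : Set S)
    (hQ : ∀ C ⊆ Q, C.Nonempty → IsChain (· ≤ ·) C → ∃ l ∈ Q, ∀ c ∈ C, l ≤ c)
    (x : S) (hx : x ∈ P ∩ Q)
    (h : ∀ p ∈ P \ {x}, ∀ q ∈ Q, ∃ q' ∈ Q, q' ≤ p ∧ q' ≤ q) :
    ∃ q₀ ∈ Q, ∀ p ∈ P, q₀ ≤ p := by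
  set T : Set S := {q ∈ Q | q ≤ x} with hT
  have hzorn := zorn_le₀ (α := Sᵒᵈ) (T : Set Sᵒᵈ) ?_
  · obtain ⟨m, hm⟩ := hzorn
    have hmT : m ∈ T := hm.1
    refine ⟨m, hmT.1, fun p hp => ?_⟩
    by_cases hpx : p = x
    · exact hpx ▸ hmT.2
    · obtain ⟨q', hq'Q, hq'p, hq'm⟩ := h p ⟨hp, hpx⟩ m hmT.1
      have hq'T : q' ∈ T := ⟨hq'Q, hq'm.trans hmT.2⟩
      have heq : q' = m := le_antisymm (α := Sᵒᵈ) (hm.2 hq'T hq'm) hq'm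
      exact heq ▸ hq'p
  · intro c hcT hc
    rcases c.eq_empty_or_nonempty with rfl | hne
    · exact ⟨x, ⟨hx.2, le_rfl⟩, fun z hz => absurd hz (Set.notMem_empty z)⟩
    · obtain ⟨l, hlQ, hl⟩ := hQ c (fun z hz => (hcT hz).1) hne hc.symm
      obtain ⟨y, hy⟩ := hne
      exact ⟨l, ⟨hlQ, (hl y hy).trans (hcT hy).2⟩, fun z hz => hl z hz⟩
end

section
/- Let X be a nonempty complete lattice with least element 0 and greatest element 1, and let F : X → 2^X be a correspondence with nonempty values. Set A'_F := {sup_X S | S a nonempty subset of Fix(F)} ∪ {0}, where Fix(F) := {x ∈ X | x ∈ F(x)}. Suppose: (i) for every x ∈ X, F(x) is chain-bounded above (every nonempty chain in F(x) has an upper bound lying in F(x)); (ii) for all x < x' in X, every maximal element y of F(x) and every maximal element y' of F(x'), one has y ≤ y'; (iii) for every h ∈ A'_F and every x ∈ [h, 1], every nonempty chain in F^h(x) := F(x) ∩ [h, ∞) has a lower bound lying in F^h(x); (iv) for every h ∈ A'_F, all x < x' in [h, 1], every minimal element y of F^h(x) and every minimal element y' of F^h(x'), one has y ≤ y'. Then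 Fix(F) is nonempty and, with the order induced from X, is a complete lattice. -/
lemma exists_maximal_above' {X : Type*} [PartialOrder X] (s : Set X)
    (hcb : ∀ C ⊆ s, C.Nonempty → IsChain (· ≤ ·) C → ∃ u ∈ s, ∀ c ∈ C, c ≤ u)
    (x : X) (hx : x ∈ s) : ∃ m ∈ s, x ≤ m ∧ ∀ z ∈ s, ¬ m < z := by
  obtain ⟨m, hxm, hms, hmax⟩ := zorn_le_nonempty₀ s
    (fun c hc hch y hy => hcb c hc ⟨y, hy⟩ hch) x hx
  exact ⟨m, hms, hxm, fun z hz hlt => hlt.not_ge (hmax hz hlt.le)⟩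

lemma exists_minimal_below' {X : Type*} [PartialOrder X] (s : Set X)
    (hcb : ∀ C ⊆ s, C.Nonempty → IsChain (· ≤ ·) C → ∃ l ∈ s, ∀ c ∈ C, l ≤ c)
    (x : X) (hx : x ∈ s) : ∃ m ∈ s, m ≤ x ∧ ∀ z ∈ s, ¬ z < m := by
  obtain ⟨m, hms, hxm, hmax⟩ := exists_maximal_above' (X := Xᵒᵈ) s
    (fun C hC hCne hch => hcb C hC hCne hch.symm) x hx
  exact ⟨m, hms, hxm, hmax⟩

/-- Least fixed point of `F` above `h`, given the truncated conditions at `h`. -/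
lemma least_fixed_above {X : Type*} [CompleteLattice X] (F : X → Set X) (h : X)
    (hGne : ∀ x, h ≤ x → (F x ∩ Set.Ici h).Nonempty)
    (hlb : ∀ x : X, h ≤ x →
      ∀ C ⊆ F x ∩ Set.Ici h, C.Nonempty → IsChain (· ≤ ·) C →
        ∃ l ∈ F x ∩ Set.Ici h, ∀ c ∈ C, l ≤ c)
    (hmin : ∀ x x' : X, h ≤ x → x < x' →
      ∀ y ∈ F x ∩ Set.Ici h, (∀ z ∈ F x ∩ Set.Ici h, ¬ z < y) →
      ∀ y' ∈ F x' ∩ Set.Ici h, (∀ z ∈ F x' ∩ Set.Ici h, ¬ z < y') → y ≤ y') :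
    ∃ v, v ∈ F v ∧ h ≤ v ∧ ∀ z, z ∈ F z → h ≤ z → v ≤ z := by
  set G : X → Set X := fun x => F x ∩ Set.Ici h with hG
  set E : Set X := {x | h ≤ x ∧ ∃ y ∈ G x, y ≤ x ∧ ∀ z ∈ G x, ¬ z < y} with hE
  -- ⊤ ∈ E
  have htop : (⊤ : X) ∈ E := by
    obtain ⟨y0, hy0⟩ := hGne ⊤ le_top
    obtain ⟨m, hm, _, hmmin⟩ := exists_minimal_below' (G ⊤) (hlb ⊤ le_top) y0 hy0
    exact ⟨le_top, m, hm, le_top, hmmin⟩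
  set v : X := sInf E with hv
  have hhv : h ≤ v := le_sInf fun x hx => hx.1
  -- v ∈ E
  have hvE : v ∈ E := by
    by_contra hvE
    obtain ⟨y0, hy0⟩ := hGne v hhv
    obtain ⟨w, hw, _, hwmin⟩ := exists_minimal_below' (G v) (hlb v hhv) y0 hy0
    have hwv : w ≤ v := by
      refine le_sInf fun x hx => ?_
      obtain ⟨hhx, y, hyG, hyx, hymin⟩ := id hx
      have hvx : v < x := lt_of_le_of_ne (sInf_le hx) (by rintro rfl; exact hvE hx)
      exact (hmin v x hhv hvx w hw hwmin y hyG hymin).trans hyx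
    exact hvE ⟨hhv, w, hw, hwv, hwmin⟩
  obtain ⟨_, y, hyG, hyv, hymin⟩ := hvE
  have hyeq : y = v := by
    by_contra hne
    have hylt : y < v := lt_of_le_of_ne hyv hne
    have hhy : h ≤ y := hyG.2
    obtain ⟨y0, hy0⟩ := hGne y hhy
    obtain ⟨w', hw', _, hw'min⟩ := exists_minimal_below' (G y) (hlb y hhy) y0 hy0
    have hw'y : w' ≤ y := hmin y v hhy hylt w' hw' hw'min y hyG hymin
    have : v ≤ y := sInf_le ⟨hhy, w', hw', hw'y, hw'min⟩
    exact hylt.not_ge this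
  rw [hyeq] at hyG
  refine ⟨v, hyG.1, hyG.2, fun z hz hhz => ?_⟩
  obtain ⟨w, hw, hwz, hwmin⟩ := exists_minimal_below' (G z) (hlb z hhz) z ⟨hz, hhz⟩
  exact sInf_le ⟨hhz, w, hw, hwz, hwmin⟩



/-- Theorem 5.1: under conditions (i)-(iv) involving truncations along
`A'_F = {sup S | ∅ ≠ S ⊆ Fix(F)} ∪ {0}`, the set `Fix(F)` is a nonempty complete
lattice. -/
theorem fixedPoints_complete_lattice_of_truncations
    {X : Type*} [CompleteLattice X] (F : X → Set X)
    (hne : ∀ x : X, (F x).Nonempty)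
    (A' : Set X)
    (hA' : A' = {a : X | ∃ T : Set X, T ⊆ {x : X | x ∈ F x} ∧ T.Nonempty ∧ a = sSup T}
      ∪ {⊥})
    (hcba : ∀ x : X, ∀ C ⊆ F x, C.Nonempty → IsChain (· ≤ ·) C →
      ∃ u ∈ F x, ∀ c ∈ C, c ≤ u)
    (hmaxinc : ∀ x x' : X, x < x' →
      ∀ y ∈ F x, (∀ z ∈ F x, ¬ y < z) →
      ∀ y' ∈ F x', (∀ z ∈ F x', ¬ y' < z) → y ≤ y')
    (hlb : ∀ h ∈ A', ∀ x : X, h ≤ x →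
      ∀ C ⊆ F x ∩ Set.Ici h, C.Nonempty → IsChain (· ≤ ·) C →
        ∃ l ∈ F x ∩ Set.Ici h, ∀ c ∈ C, l ≤ c)
    (hmininc : ∀ h ∈ A', ∀ x x' : X, h ≤ x → x < x' →
      ∀ y ∈ F x ∩ Set.Ici h, (∀ z ∈ F x ∩ Set.Ici h, ¬ z < y) →
      ∀ y' ∈ F x' ∩ Set.Ici h, (∀ z ∈ F x' ∩ Set.Ici h, ¬ z < y') → y ≤ y') :
    {x : X | x ∈ F x}.Nonempty ∧ IsCompleteLatticeIn {x : X | x ∈ F x} := by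
  set Fix : Set X := {x : X | x ∈ F x} with hFix
  -- For every S ⊆ Fix, there is a least fixed point above sSup S (a least upper bound
  -- of S within Fix).
  have key : ∀ S : Set X, S ⊆ Fix →
      ∃ a ∈ Fix, (∀ s ∈ S, s ≤ a) ∧ ∀ b ∈ Fix, (∀ s ∈ S, s ≤ b) → a ≤ b := by
    intro S hS
    set h : X := sSup S with hh
    have hhA : h ∈ A' := by
      rw [hA']
      rcases S.eq_empty_or_nonempty with rfl | hSne
      · right; simp [hh]
      · left; exact ⟨S, hS, hSne, rfl⟩
    -- nonemptiness of the truncated values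
    have hGne : ∀ x, h ≤ x → (F x ∩ Set.Ici h).Nonempty := by
      intro x hx
      by_cases hxS : x ∈ S
      · -- then h = x and x ∈ F x
        obtain ⟨m, hm, hxm, _⟩ := exists_maximal_above' (F x) (hcba x) x (hS hxS)
        exact ⟨m, hm, le_trans hx hxm⟩
      · obtain ⟨y0, hy0⟩ := hne x
        obtain ⟨m, hm, _, hmmax⟩ := exists_maximal_above' (F x) (hcba x) y0 hy0
        refine ⟨m, hm, ?_⟩
        refine sSup_le fun s hsS => ?_
        have hsx : s < x := lt_of_le_of_ne (le_trans (le_sSup hsS) hx)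
          (by rintro rfl; exact hxS hsS)
        obtain ⟨ys, hys, hsys, hysmax⟩ :=
          exists_maximal_above' (F s) (hcba s) s (hS hsS)
        exact hsys.trans (hmaxinc s x hsx ys hys hysmax m hm hmmax)
    obtain ⟨v, hvF, hhv, hvleast⟩ :=
      least_fixed_above F h hGne (fun x hx => hlb h hhA x hx)
        (fun x x' hx hxx' => hmininc h hhA x x' hx hxx')
    refine ⟨v, hvF, fun s hsS => (le_sSup hsS).trans hhv, fun b hbF hb => ?_⟩
    exact hvleast b hbF (sSup_le hb)
  have hne' : Fix.Nonempty := by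
    obtain ⟨a, ha, _⟩ := key ∅ (Set.empty_subset _)
    exact ⟨a, ha⟩
  refine ⟨hne', fun S hS => ⟨key S hS, ?_⟩⟩
  -- infimum from supremum of the set of lower bounds
  set L : Set X := {b ∈ Fix | ∀ s ∈ S, b ≤ s} with hL
  obtain ⟨a, haF, haub, haleast⟩ := key L (fun b hb => hb.1)
  have halb : ∀ s ∈ S, a ≤ s := fun s hsS =>
    haleast s (hS hsS) (fun b hb => hb.2 s hsS)
  exact ⟨a, haF, halb, fun b hbF hb => haub b ⟨hbF, hb⟩⟩
end

section
/- Let X be a nonempty complete lattice with least element 0 and let F : X → 2^X be a correspondence with nonempty values. Assume that for every x ∈ X the set F(x) is chain-bounded above (every nonempty chain in F(x) has an upper bound lying in F(x)), and that for all x < x' in X, every maximal element y of F(x) and every maximal element y' of F(x'), one has y ≤ y'. Then A'_F ⊆ A_F, where A'_F := {sup_X S | S a nonempty subset of Fix(F)} ∪ {0} and A_F := {x ∈ X | ∃ y ∈ F(x), x ≤ y}. -/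
/-- Lemma 5.2: if the values of `F` are chain-bounded above and maximal elements of
values are increasing along strict inequalities, then `A'_F ⊆ A_F`. -/
theorem A'F_subset_AF
    {X : Type*} [CompleteLattice X] (F : X → Set X)
    (hne : ∀ x : X, (F x).Nonempty)
    (hcba : ∀ x : X, ∀ C ⊆ F x, C.Nonempty → IsChain (· ≤ ·) C →
      ∃ u ∈ F x, ∀ c ∈ C, c ≤ u)
    (hmaxinc : ∀ x x' : X, x < x' →
      ∀ y ∈ F x, (∀ z ∈ F x, ¬ y < z) →
      ∀ y' ∈ F x', (∀ z ∈ F x', ¬ y' < z) → y ≤ y') :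
    ({a : X | ∃ T : Set X, T ⊆ {x : X | x ∈ F x} ∧ T.Nonempty ∧ a = sSup T} ∪ {⊥})
      ⊆ {x : X | ∃ y ∈ F x, x ≤ y} := by
  -- a maximal element of F x exists, for each x
  have hzorn : ∀ (x : X) (y : X), y ∈ F x → ∃ m, y ≤ m ∧ Maximal (· ∈ F x) m := by
    intro x y hy
    exact zorn_le_nonempty₀ (F x)
      (fun c hc hchain z hz => hcba x c hc ⟨z, hz⟩ hchain) y hy
  rintro a (⟨T, hT, ⟨t0, ht0⟩, rfl⟩ | ha)
  · by_cases hfix : sSup T ∈ T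
    · exact ⟨sSup T, hT hfix, le_refl _⟩
    · -- every t ∈ T satisfies t < sSup T
      obtain ⟨m, hm⟩ := (hzorn (sSup T) _ (hne (sSup T)).choose_spec).imp
        (fun m h => h.2)
      refine ⟨m, hm.1, sSup_le fun t ht => ?_⟩
      have hlt : t < sSup T := lt_of_le_of_ne (le_sSup ht) (fun h => hfix (h ▸ ht))
      obtain ⟨mt, hmt_le, hmt⟩ := hzorn t t (hT ht)
      have : mt ≤ m := by
        refine hmaxinc t (sSup T) hlt mt hmt.1
          (fun z hz hlt' => hlt'.not_ge (hmt.2 hz hlt'.le)) m hm.1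
          (fun z hz hlt' => hlt'.not_ge (hm.2 hz hlt'.le))
      exact hmt_le.trans this
  · simp only [Set.mem_singleton_iff] at ha
    subst ha
    obtain ⟨y, hy⟩ := hne ⊥
    exact ⟨y, hy, bot_le⟩
end

section
/- Let X be a nonempty poset in which every nonempty well-ordered subset has a least upper bound. Let F : X → 2^X be a correspondence such that: (1) for every nonempty well-ordered subset C of X, every x ∈ X with c < x for all c ∈ C, and every selection f : C → X of F (i.e., f(c) ∈ F(c) for all c ∈ C), there exists y ∈ F(x) with f(c) ≤ y for all c ∈ C; (2) the set A_F := {x ∈ X | ∃ y ∈ F(x), x ≤ y} is nonempty. Then F has a fixed point, i.e., there exists x ∈ X with x ∈ F(x). -/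
/-!
Choose a selection `g` of `F` on `A_F` with `x ≤ g x`. If `F` had no fixed point, then `x < g x`
on `A_F`, and condition (1) shows that `A_F` is closed under `g` and under least upper bounds of
nonempty well-ordered subsets. Iterating `g` transfinitely from a point of `A_F`, taking least
upper bounds at limit stages, gives a strictly increasing map from the ordinals into `X`, which
is impossible for size reasons.
-/

universe u

/-- A subset `C` of a poset is well-ordered (in the induced order) if every nonempty
subset of `C` has a least element. -/
def IsWellOrderedSubset {X : Type*} [PartialOrder X] (C : Set X) : Prop :=
  ∀ T ⊆ C, T.Nonempty → ∃ m ∈ T, ∀ t ∈ T, m ≤ t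

section WellOrderedSubset

variable {X : Type*} [PartialOrder X]

theorem Set.Subsingleton.isWellOrderedSubset {C : Set X} (hC : C.Subsingleton) :
    IsWellOrderedSubset C := fun _ hT ⟨m, hm⟩ =>
  ⟨m, hm, fun _ ht => (hC (hT hm) (hT ht)).le⟩

theorem StrictMonoOn.isWellOrderedSubset_image {ι : Type*} [LinearOrder ι] [WellFoundedLT ι]
    {f : ι → X} {s : Set ι} (hf : StrictMonoOn f s) : IsWellOrderedSubset (f '' s) := by
  intro T hT ⟨t, ht⟩
  obtain ⟨i, hi, rfl⟩ := hT ht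
  obtain ⟨i₀, ⟨hi₀s, hi₀T⟩, hi₀min⟩ :=
    wellFounded_lt.has_min (s ∩ f ⁻¹' T) ⟨i, hi, ht⟩
  refine ⟨f i₀, hi₀T, fun t' ht' => ?_⟩
  obtain ⟨j, hj, rfl⟩ := hT ht'
  exact hf.monotoneOn hi₀s hj (not_lt.mp (hi₀min j ⟨hj, ht'⟩))

end WellOrderedSubset

section TransfiniteOrbit

variable {X : Type u}

noncomputable def transfiniteOrbit (g : X → X) (lub : Set X → X) (a : X) (α : Ordinal.{u}) :
    X :=
  Ordinal.limitRecOn α a (fun _ => g) fun β _ ih =>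
    lub (Set.range fun γ : Set.Iio β => ih γ γ.2)

variable (g : X → X) (lub : Set X → X) (a : X)

@[simp]
theorem transfiniteOrbit_zero : transfiniteOrbit g lub a 0 = a :=
  Ordinal.limitRecOn_zero ..

@[simp]
theorem transfiniteOrbit_succ (α : Ordinal.{u}) :
    transfiniteOrbit g lub a (α + 1) = g (transfiniteOrbit g lub a α) :=
  Ordinal.limitRecOn_add_one ..

theorem transfiniteOrbit_of_isSuccLimit {α : Ordinal.{u}} (hα : Order.IsSuccLimit α) :
    transfiniteOrbit g lub a α = lub (transfiniteOrbit g lub a '' Set.Iio α) := by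
  rw [transfiniteOrbit, Ordinal.limitRecOn_limit _ _ _ _ hα, Set.image_eq_range]
  rfl

variable [PartialOrder X] {g lub a} {A : Set X}

theorem transfiniteOrbit_mem_and_lt (ha : a ∈ A) (hgA : Set.MapsTo g A A)
    (hlt : ∀ x ∈ A, x < g x)
    (hlub : ∀ C ⊆ A, C.Nonempty → IsWellOrderedSubset C → lub C ∈ A ∧ IsLUB C (lub C))
    (α : Ordinal.{u}) :
    transfiniteOrbit g lub a α ∈ A ∧
      ∀ β < α, transfiniteOrbit g lub a β < transfiniteOrbit g lub a α := by
  set f := transfiniteOrbit g lub a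
  induction α using WellFoundedLT.induction with
  | ind α IH =>
  rcases Ordinal.zero_or_succ_or_isSuccLimit α with rfl | ⟨γ, rfl⟩ | hα
  · exact ⟨by simpa [f] using ha, fun β hβ => (not_lt_zero hβ).elim⟩
  · rw [Order.succ_eq_add_one] at IH ⊢
    obtain ⟨hγA, hγlt⟩ := IH γ (lt_add_one γ)
    have hstep : f γ < f (γ + 1) := by simpa [f] using hlt _ hγA
    refine ⟨by simpa [f] using hgA hγA, fun β hβ => ?_⟩
    rcases (Order.lt_add_one_iff.mp hβ).lt_or_eq with hβγ | rfl
    · exact (hγlt β hβγ).trans hstep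
    · exact hstep
  · have hmono : StrictMonoOn f (Set.Iio α) := fun β _ γ hγ hβγ => (IH γ hγ).2 β hβγ
    obtain ⟨hlubA, hlubC⟩ := hlub (f '' Set.Iio α)
      (Set.image_subset_iff.mpr fun β hβ => (IH β hβ).1)
      ⟨f 0, 0, hα.bot_lt, rfl⟩ hmono.isWellOrderedSubset_image
    rw [show f α = _ from transfiniteOrbit_of_isSuccLimit g lub a hα]
    refine ⟨hlubA, fun β hβ => ?_⟩
    have hsucc : Order.succ β < α := hα.succ_lt hβ
    calc f β < f (Order.succ β) := hmono hβ hsucc (Order.lt_succ β)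
      _ ≤ _ := hlubC.1 ⟨_, hsucc, rfl⟩

theorem Set.eq_empty_of_lt_map_of_isLUB_mem (hgA : Set.MapsTo g A A) (hlt : ∀ x ∈ A, x < g x)
    (hA : ∀ C ⊆ A, C.Nonempty → IsWellOrderedSubset C → ∃ s ∈ A, IsLUB C s) :
    A = ∅ := by
  rw [← Set.not_nonempty_iff_eq_empty]
  rintro ⟨a, ha⟩
  have : Nonempty X := ⟨a⟩
  choose! lub hlub using hA
  have hmono : StrictMono (transfiniteOrbit g lub a) := fun β α hβα =>
    (transfiniteOrbit_mem_and_lt ha hgA hlt hlub α).2 β hβα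
  exact not_small_ordinal.{u} (small_of_injective hmono.injective)

end TransfiniteOrbit

section Correspondence

variable {X : Type*} [PartialOrder X]

/-- The set `A_F` of the paper. -/
def ascentSet (F : X → Set X) : Set X := {x | ∃ y ∈ F x, x ≤ y}

/-- Condition (1) of the theorem. -/
def DominatesWellOrderedSelections (F : X → Set X) : Prop :=
  ∀ C : Set X, C.Nonempty → IsWellOrderedSubset C → ∀ x : X, (∀ c ∈ C, c < x) →
    ∀ f : X → X, (∀ c ∈ C, f c ∈ F c) → ∃ y ∈ F x, ∀ c ∈ C, f c ≤ y

variable {F : X → Set X}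

theorem DominatesWellOrderedSelections.mem_ascentSet_of_mem_of_lt
    (hF : DominatesWellOrderedSelections F) {x y : X} (hy : y ∈ F x) (hxy : x < y) :
    y ∈ ascentSet F := by
  obtain ⟨z, hz, hyz⟩ := hF {x} (Set.singleton_nonempty x)
    Set.subsingleton_singleton.isWellOrderedSubset y (by simpa using hxy) (fun _ => y)
    (by simpa using hy)
  exact ⟨z, hz, hyz x rfl⟩

theorem DominatesWellOrderedSelections.mem_ascentSet_of_isLUB
    (hF : DominatesWellOrderedSelections F) {C : Set X} (hCA : C ⊆ ascentSet F)
    (hne : C.Nonempty) (hC : IsWellOrderedSubset C) {s : X} (hs : IsLUB C s) :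
    s ∈ ascentSet F := by
  by_cases hsC : s ∈ C
  · exact hCA hsC
  have hlt : ∀ c ∈ C, c < s := fun c hc => (hs.1 hc).lt_of_ne (ne_of_mem_of_not_mem hc hsC)
  choose! f hfF hcf using hCA
  obtain ⟨y, hy, hfy⟩ := hF C hne hC s hlt f hfF
  exact ⟨y, hy, hs.2 fun c hc => (hcf hc).trans (hfy c hc)⟩

end Correspondence

theorem multivalued_abian_brown_general
    {X : Type*} [PartialOrder X] (F : X → Set X)
    (hwlub : ∀ C : Set X, C.Nonempty → IsWellOrderedSubset C → ∃ s, IsLUB C s)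
    (h1 : ∀ C : Set X, C.Nonempty → IsWellOrderedSubset C →
      ∀ x : X, (∀ c ∈ C, c < x) →
      ∀ f : X → X, (∀ c ∈ C, f c ∈ F c) →
      ∃ y ∈ F x, ∀ c ∈ C, f c ≤ y)
    (h2 : {x : X | ∃ y ∈ F x, x ≤ y}.Nonempty) :
    ∃ x : X, x ∈ F x := by
  have hF : DominatesWellOrderedSelections F := h1
  by_contra! hfix
  choose! g hgF hxg using fun x (hx : x ∈ ascentSet F) => hx
  have hlt : ∀ x ∈ ascentSet F, x < g x := fun x hx =>
    (hxg x hx).lt_of_ne fun hxgx => hfix x (by simpa [← hxgx] using hgF x hx)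
  have hclosed : ∀ C ⊆ ascentSet F, C.Nonempty → IsWellOrderedSubset C →
      ∃ s ∈ ascentSet F, IsLUB C s := fun C hCA hne hC =>
    let ⟨s, hs⟩ := hwlub C hne hC
    ⟨s, hF.mem_ascentSet_of_isLUB hCA hne hC hs, hs⟩
  exact h2.ne_empty <| Set.eq_empty_of_lt_map_of_isLUB_mem
    (fun x hx => hF.mem_ascentSet_of_mem_of_lt (hgF x hx) (hlt x hx)) hlt hclosed

/-- Theorem 6.1 (multivalued Abian-Brown): let `X` be a nonempty poset in which every
nonempty well-ordered subset has a least upper bound. If `F` dominates selections on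
well-ordered subsets from above (condition (1)) and `A_F ≠ ∅`, then `F` has a fixed
point. -/
theorem multivalued_abian_brown
    {X : Type*} [PartialOrder X] [Nonempty X] (F : X → Set X)
    (hwlub : ∀ C : Set X, C.Nonempty → IsWellOrderedSubset C → ∃ s, IsLUB C s)
    (h1 : ∀ C : Set X, C.Nonempty → IsWellOrderedSubset C →
      ∀ x : X, (∀ c ∈ C, c < x) →
      ∀ f : X → X, (∀ c ∈ C, f c ∈ F c) →
      ∃ y ∈ F x, ∀ c ∈ C, f c ≤ y)
    (h2 : {x : X | ∃ y ∈ F x, x ≤ y}.Nonempty) :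
    ∃ x : X, x ∈ F x :=
  multivalued_abian_brown_general F hwlub h1 h2
end

section
/- Let X be a nonempty chain-complete poset (X has a least element and every nonempty chain in X has a supremum in X). Let F : X → 2^X be a correspondence such that for every chain U ⊆ X, every subset V ⊆ X, all selections f : U → X and g : V → X of F satisfying f(u) ≤ g(v) for all u ∈ U and v ∈ V, and every x ∈ X with u < x for all u ∈ U and x < v for all v ∈ V, there exists y ∈ F(x) with f(u) ≤ y for all u ∈ U and y ≤ g(v) for all v ∈ V. Then the set Fix(F) := {x ∈ X | x ∈ F(x)} has a least element. -/
universe u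

/-- The set of admissible "next values" given a set `P` of previously chosen values:
elements of `F (L P)` that dominate everything in `P` and are below every fixed point. -/
def mmNext {X : Type u} [PartialOrder X] (F : X → Set X) (L : Set X → X)
    (P : Set X) : Set X :=
  {y | y ∈ F (L P) ∧ (∀ p ∈ P, p ≤ y) ∧ ∀ z : X, z ∈ F z → y ≤ z}

open Classical in
/-- Transfinite sequence of chosen values. -/
noncomputable def mmSeq {X : Type u} [PartialOrder X] (F : X → Set X) (L : Set X → X) :
    Ordinal.{u} → X :=
  Ordinal.lt_wf.fix fun α ih =>
    if h : (mmNext F L {x | ∃ β : Ordinal.{u}, ∃ hβ : β < α, ih β hβ = x}).Nonempty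
    then h.choose else L ∅

open Classical in
theorem mmSeq_eq {X : Type u} [PartialOrder X] (F : X → Set X) (L : Set X → X)
    (α : Ordinal.{u}) :
    mmSeq F L α =
      if h : (mmNext F L {x | ∃ β : Ordinal.{u}, ∃ _ : β < α, mmSeq F L β = x}).Nonempty
      then h.choose else L ∅ :=
  Ordinal.lt_wf.fix_eq _ α

theorem mm_no_inj {X : Type u} (y : Ordinal.{u} → X) : ¬ Function.Injective y := fun h =>
  not_small_ordinal.{u, u} (small_of_injective h)

/-- Theorem 6.2(1) (multivalued Markowsky): on a chain-complete poset, a correspondence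
satisfying the interpolation condition on selections has a least fixed point. -/
theorem multivalued_markowsky_least_fixed_point
    {X : Type*} [PartialOrder X] [Nonempty X] (F : X → Set X)
    (hbot : ∃ b : X, ∀ x : X, b ≤ x)
    (hcc : ∀ C : Set X, C.Nonempty → IsChain (· ≤ ·) C → ∃ s, IsLUB C s)
    (hF : ∀ U V : Set X, IsChain (· ≤ ·) U →
      ∀ f g : X → X, (∀ u ∈ U, f u ∈ F u) → (∀ v ∈ V, g v ∈ F v) →
      (∀ u ∈ U, ∀ v ∈ V, f u ≤ g v) →
      ∀ x : X, (∀ u ∈ U, u < x) → (∀ v ∈ V, x < v) →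
      ∃ y ∈ F x, (∀ u ∈ U, f u ≤ y) ∧ ∀ v ∈ V, y ≤ g v) :
    ∃ m : X, m ∈ F m ∧ ∀ z : X, z ∈ F z → m ≤ z := by
  classical
  by_contra hcon
  push_neg at hcon
  obtain ⟨b, hb⟩ := hbot
  -- no m can be a fixed point below all fixed points
  have key : ∀ m : X, m ∈ F m → (∀ z : X, z ∈ F z → m ≤ z) → False := by
    intro m h1 h2
    obtain ⟨z, hz, hz2⟩ := hcon m h1
    exact hz2 (h2 z hz)
  set L : Set X → X := fun Q =>
    if h : Q.Nonempty ∧ IsChain (· ≤ ·) Q then (hcc Q h.1 h.2).choose else b with hLdef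
  have hLspec : ∀ Q : Set X, Q.Nonempty → IsChain (· ≤ ·) Q → IsLUB Q (L Q) := by
    intro Q h1 h2
    show IsLUB Q (if h : Q.Nonempty ∧ IsChain (· ≤ ·) Q then (hcc Q h.1 h.2).choose else b)
    rw [dif_pos (⟨h1, h2⟩ : Q.Nonempty ∧ IsChain (· ≤ ·) Q)]
    exact (hcc Q h1 h2).choose_spec
  have hLempty : ∀ Q : Set X, ¬ Q.Nonempty → L Q = b := by
    intro Q hQ
    show (if h : Q.Nonempty ∧ IsChain (· ≤ ·) Q then (hcc Q h.1 h.2).choose else b) = b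
    rw [dif_neg (fun h => hQ h.1)]
  set y := mmSeq F L with hydef
  set P : Ordinal → Set X := fun α => {x | ∃ β, ∃ _ : β < α, y β = x} with hPdef
  have hconv : ∀ α : Ordinal, (mmNext F L (P α)).Nonempty → y α ∈ mmNext F L (P α) := by
    intro α h
    have e := mmSeq_eq F L α
    rw [dif_pos h] at e
    rw [hydef, e]
    exact h.choose_spec
  -- main claim by transfinite induction
  have main : ∀ α : Ordinal, y α ∈ mmNext F L (P α) := by
    intro α
    induction α using Ordinal.induction with
    | _ α IH =>
    apply hconv
    -- facts from the induction hypothesis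
    have hdom : ∀ β, β < α → ∀ z : X, z ∈ F z → y β ≤ z := fun β h => (IH β h).2.2
    have hmono : ∀ β γ, β < γ → γ < α → y β ≤ y γ := by
      intro β γ h1 h2
      exact (IH γ h2).2.1 (y β) ⟨β, h1, rfl⟩
    have hmono' : ∀ β γ, β ≤ γ → γ < α → y β ≤ y γ := by
      intro β γ h1 h2
      rcases eq_or_lt_of_le h1 with rfl | h1
      · exact le_rfl
      · exact hmono _ _ h1 h2
    have hchainAll : ∀ γ : Ordinal, γ ≤ α → IsChain (· ≤ ·) (P γ) := by
      intro γ hγ p hp q hq _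
      obtain ⟨β1, hβ1, rfl⟩ := hp
      obtain ⟨β2, hβ2, rfl⟩ := hq
      rcases le_total β1 β2 with h | h
      · exact Or.inl (hmono' _ _ h (lt_of_lt_of_le hβ2 hγ))
      · exact Or.inr (hmono' _ _ h (lt_of_lt_of_le hβ1 hγ))
    have hchain : IsChain (· ≤ ·) (P α) := hchainAll α le_rfl
    -- y β dominates L (P β)
    have hxley : ∀ β, β < α → L (P β) ≤ y β := by
      intro β hβ
      by_cases hne : (P β).Nonempty
      · exact (hLspec (P β) hne (hchainAll β hβ.le)).2 (fun p hp => (IH β hβ).2.1 p hp)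
      · rw [hLempty _ hne]; exact hb _
    set x : X := L (P α) with hxdef
    -- x is below every fixed point
    have hxz : ∀ z : X, z ∈ F z → x ≤ z := by
      intro z hz
      by_cases hne : (P α).Nonempty
      · exact (hLspec (P α) hne hchain).2 (by rintro p ⟨β, hβ, rfl⟩; exact hdom β hβ z hz)
      · rw [hxdef, hLempty _ hne]; exact hb _
    by_cases hx : x ∈ F x
    · exact (key x hx hxz).elim
    have hxltz : ∀ z : X, z ∈ F z → x < z := by
      intro z hz
      exact lt_of_le_of_ne (hxz z hz) (by rintro rfl; exact hx hz)
    by_cases hne : (P α).Nonempty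
    · -- P α nonempty
      have hlub : IsLUB (P α) x := hLspec (P α) hne hchain
      by_cases hxP : x ∈ P α
      · -- the lub is attained: single point interpolation
        obtain ⟨β, hβ, hyβ⟩ := hxP
        have hxβle : L (P β) ≤ x := by
          by_cases hne2 : (P β).Nonempty
          · refine (hLspec (P β) hne2 (hchainAll β hβ.le)).2 ?_
            rintro p ⟨γ, hγ, rfl⟩
            exact hlub.1 ⟨γ, hγ.trans hβ, rfl⟩
          · rw [hLempty _ hne2]; exact hb _
        have hyβF : x ∈ F (L (P β)) := by rw [← hyβ]; exact (IH β hβ).1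
        have hxβne : L (P β) ≠ x := by
          intro h
          apply hx
          rwa [h] at hyβF
        obtain ⟨w, hwF, hwge, hwle⟩ :=
          hF {L (P β)} {z | z ∈ F z} (Set.Subsingleton.isChain (Set.subsingleton_singleton))
            (fun _ => x) id
            (by rintro u rfl; exact hyβF)
            (fun v hv => hv)
            (by rintro u rfl v hv; rw [← hyβ]; exact hdom β hβ v hv)
            x
            (by rintro u rfl; exact lt_of_le_of_ne hxβle hxβne)
            (fun v hv => hxltz v hv)
        exact ⟨w, hwF, fun p hp => le_trans (hlub.1 hp) (hwge _ rfl),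
          fun z hz => hwle z hz⟩
      · -- the lub is not attained: interpolate over the chain of previous domain points
        -- distinct indices give distinct domain points (else a least fixed point exists)
        have huniq : ∀ β γ, β < γ → γ < α → L (P β) = L (P γ) → False := by
          intro β γ h1 h2 heq
          have hyβmem : y β ∈ P γ := ⟨β, h1, rfl⟩
          have h3 : y β ≤ L (P γ) :=
            (hLspec (P γ) ⟨y β, hyβmem⟩ (hchainAll γ h2.le)).1 hyβmem
          have h4 : y β = L (P β) := le_antisymm (heq ▸ h3) (hxley β (h1.trans h2))
          have h5 : y β ∈ F (y β) := by
            have := (IH β (h1.trans h2)).1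
            rwa [← h4] at this
          exact key (y β) h5 (hdom β (h1.trans h2))
        -- each previous domain point is strictly below x
        have hlt : ∀ β, β < α → L (P β) < x := by
          intro β hβ
          have hle : L (P β) ≤ x := by
            by_cases hne2 : (P β).Nonempty
            · refine (hLspec (P β) hne2 (hchainAll β hβ.le)).2 ?_
              rintro p ⟨γ, hγ, rfl⟩
              exact hlub.1 ⟨γ, hγ.trans hβ, rfl⟩
            · rw [hLempty _ hne2]; exact hb _
          refine lt_of_le_of_ne hle ?_
          intro heq
          apply hxP
          have h1 : x ≤ y β := heq ▸ hxley β hβ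
          have h2 : y β ≤ x := hlub.1 ⟨β, hβ, rfl⟩
          exact ⟨β, hβ, le_antisymm h2 h1⟩
        set U : Set X := {u | ∃ β, ∃ _ : β < α, L (P β) = u} with hUdef
        set f : X → X := fun u =>
          if h : ∃ β, ∃ _ : β < α, L (P β) = u then y h.choose else u with hfdef
        have hfval : ∀ β, β < α → f (L (P β)) = y β := by
          intro β hβ
          have hex : ∃ β', ∃ _ : β' < α, L (P β') = L (P β) := ⟨β, hβ, rfl⟩
          rw [hfdef]
          simp only [dif_pos hex]
          obtain ⟨hlt', heq'⟩ := hex.choose_spec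
          by_cases hc : hex.choose = β
          · rw [hc]
          · rcases lt_or_gt_of_ne hc with h | h
            · exact absurd heq' (fun hh => huniq _ _ h hβ hh)
            · exact absurd heq'.symm (fun hh => huniq _ _ h hlt' hh)
        have hchainU : IsChain (· ≤ ·) U := by
          rintro u ⟨β1, hβ1, rfl⟩ v ⟨β2, hβ2, rfl⟩ _
          have hkey : ∀ γ δ : Ordinal, γ ≤ δ → δ < α → L (P γ) ≤ L (P δ) := by
            intro γ δ h1 h2
            by_cases hne2 : (P γ).Nonempty
            · refine (hLspec (P γ) hne2 (hchainAll γ (h1.trans h2.le))).2 ?_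
              rintro p ⟨ε, hε, rfl⟩
              have hεδ : ε < δ := lt_of_lt_of_le hε h1
              exact (hLspec (P δ) ⟨y ε, ε, hεδ, rfl⟩ (hchainAll δ h2.le)).1 ⟨ε, hεδ, rfl⟩
            · rw [hLempty _ hne2]; exact hb _
          rcases le_total β1 β2 with h | h
          · exact Or.inl (hkey _ _ h hβ2)
          · exact Or.inr (hkey _ _ h hβ1)
        obtain ⟨w, hwF, hwge, hwle⟩ :=
          hF U {z | z ∈ F z} hchainU f id
            (by
              rintro u ⟨β, hβ, rfl⟩
              rw [hfval β hβ]
              exact (IH β hβ).1)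
            (fun v hv => hv)
            (by
              rintro u ⟨β, hβ, rfl⟩ v hv
              rw [hfval β hβ]
              exact hdom β hβ v hv)
            x
            (by rintro u ⟨β, hβ, rfl⟩; exact hlt β hβ)
            (fun v hv => hxltz v hv)
        refine ⟨w, hwF, ?_, fun z hz => hwle z hz⟩
        rintro p ⟨β, hβ, rfl⟩
        have := hwge (L (P β)) ⟨β, hβ, rfl⟩
        rwa [hfval β hβ] at this
    · -- P α empty: x = b, interpolate from nothing
      have hxb : x = b := by rw [hxdef, hLempty _ hne]
      obtain ⟨w, hwF, _, hwle⟩ :=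
        hF ∅ {z | z ∈ F z} (Set.Subsingleton.isChain Set.subsingleton_empty) id id
          (fun u hu => absurd hu (Set.notMem_empty u))
          (fun v hv => hv)
          (fun u hu => absurd hu (Set.notMem_empty u))
          x
          (fun u hu => absurd hu (Set.notMem_empty u))
          (fun v hv => hxltz v hv)
      exact ⟨w, hwF, fun p hp => absurd (⟨p, hp⟩ : (P α).Nonempty) hne,
        fun z hz => hwle z hz⟩
  -- monotonicity and injectivity of the transfinite sequence
  have hmono : ∀ β γ : Ordinal, β < γ → y β ≤ y γ := by
    intro β γ h
    exact (main γ).2.1 (y β) ⟨β, h, rfl⟩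
  have hinj2 : ∀ β γ : Ordinal, β < γ → y β = y γ → False := by
    intro β γ h heq
    -- y (β+1) = y β
    have h1 : y β ≤ y (Order.succ β) := hmono _ _ (Order.lt_succ β)
    have h2 : y (Order.succ β) ≤ y γ := by
      rcases eq_or_lt_of_le (Order.succ_le_of_lt h) with hs | hs
      · rw [hs]
      · exact hmono _ _ hs
    have h3 : y (Order.succ β) = y β := le_antisymm (h2.trans heq.symm.le) h1
    -- L (P (succ β)) = y β, since y β is a maximum of P (succ β)
    have hmemP : y β ∈ P (Order.succ β) := ⟨β, Order.lt_succ β, rfl⟩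
    have hchainP : IsChain (· ≤ ·) (P (Order.succ β)) := by
      rintro p ⟨β1, hβ1, rfl⟩ q ⟨β2, hβ2, rfl⟩ _
      rcases lt_trichotomy β1 β2 with h | h | h
      · exact Or.inl (hmono _ _ h)
      · exact Or.inl (h ▸ le_rfl)
      · exact Or.inr (hmono _ _ h)
    have hublub : IsLUB (P (Order.succ β)) (y β) := by
      constructor
      · rintro p ⟨ε, hε, rfl⟩
        rcases eq_or_lt_of_le (Order.lt_succ_iff.mp hε) with h | h
        · rw [h]
        · exact hmono _ _ h
      · intro w hw
        exact hw hmemP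
    have hLeq : L (P (Order.succ β)) = y β :=
      (hLspec _ ⟨y β, hmemP⟩ hchainP).unique hublub
    have hfix : y β ∈ F (y β) := by
      have := (main (Order.succ β)).1
      rwa [hLeq, h3] at this
    exact key (y β) hfix (main β).2.2
  have hinj : Function.Injective y := by
    intro β γ heq
    by_contra hne
    rcases lt_or_gt_of_ne hne with h | h
    · exact hinj2 β γ h heq
    · exact hinj2 γ β h heq.symm
  exact mm_no_inj y hinj
end

section
/- Let X be a nonempty chain-complete poset (X has a least element and every nonempty chain in X has a supremum in X). Let F : X → 2^X be a correspondence such that for every chain U ⊆ X, every subset V ⊆ X, all selections f : U → X and g : V → X of F satisfying f(u) ≤ g(v) for all u ∈ U and v ∈ V, and every x ∈ X with u < x for all u ∈ U and x < v for all v ∈ V, there exists y ∈ F(x) with f(u) ≤ y for all u ∈ U and y ≤ g(v) for all v ∈ V. Then for every v ∈ B_F := {x ∈ X | ∃ y ∈ F(x), y ≤ x}, the least element of Fix(F) := {x ∈ X | x ∈ F(x)} exists and satisfies min Fix(F) ≤ v. -/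
universe u

noncomputable def ordSeqAux {X : Type u} (step : Set X → X) : Ordinal.{u} → X :=
  Ordinal.lt_wf.fix fun o ih => step {x | ∃ β, ∃ h : β < o, ih β h = x}

theorem ordSeqAux_eq {X : Type u} (step : Set X → X) (o : Ordinal.{u}) :
    ordSeqAux step o = step {x | ∃ β, ∃ _ : β < o, ordSeqAux step β = x} :=
  WellFounded.fix_eq _ _ _

/-- Theorem 6.2(2) (multivalued Markowsky): on a chain-complete poset, for a
correspondence satisfying the interpolation condition, the least fixed point exists and
is below every element of `B_F`. -/
theorem multivalued_markowsky_least_le_BF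
    {X : Type*} [PartialOrder X] [Nonempty X] (F : X → Set X)
    (hbot : ∃ b : X, ∀ x : X, b ≤ x)
    (hcc : ∀ C : Set X, C.Nonempty → IsChain (· ≤ ·) C → ∃ s, IsLUB C s)
    (hF : ∀ U V : Set X, IsChain (· ≤ ·) U →
      ∀ f g : X → X, (∀ u ∈ U, f u ∈ F u) → (∀ v ∈ V, g v ∈ F v) →
      (∀ u ∈ U, ∀ v ∈ V, f u ≤ g v) →
      ∀ x : X, (∀ u ∈ U, u < x) → (∀ v ∈ V, x < v) →
      ∃ y ∈ F x, (∀ u ∈ U, f u ≤ y) ∧ ∀ v ∈ V, y ≤ g v) :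
    ∀ v : X, (∃ y ∈ F v, y ≤ v) →
      ∃ m : X, (m ∈ F m ∧ ∀ z : X, z ∈ F z → m ≤ z) ∧ m ≤ v := by
  classical
  obtain ⟨b, hb⟩ := hbot
  set B : Set X := {x | ∃ y ∈ F x, y ≤ x} with hBdef
  -- a selection g on B with g v ≤ v, which is the identity on fixed points
  obtain ⟨g, hgF, hgle, hgFix⟩ :
      ∃ g : X → X, (∀ v ∈ B, g v ∈ F v) ∧ (∀ v ∈ B, g v ≤ v) ∧ ∀ z, z ∈ F z → g z = z := by
    refine ⟨fun v => if h : v ∈ F v then v else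
      (if h2 : ∃ y ∈ F v, y ≤ v then h2.choose else v), ?_, ?_, ?_⟩
    · intro v hv
      by_cases h : v ∈ F v
      · simp [h]
      · obtain ⟨hy1, _⟩ := hv.choose_spec
        simpa [h, dif_pos (show ∃ y ∈ F v, y ≤ v from hv)] using hy1
    · intro v hv
      by_cases h : v ∈ F v
      · simp [h]
      · obtain ⟨_, hy2⟩ := hv.choose_spec
        simpa [h, dif_pos (show ∃ y ∈ F v, y ≤ v from hv)] using hy2
    · intro z hz; simp [hz]
  -- the "next element" function
  set P : X → X → Prop := fun x y => y ∈ F x ∧ x ≤ y ∧ ∀ v ∈ B, y ≤ g v with hPdef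
  set yfun : X → X := fun x => if h : ∃ y, P x y then h.choose else x with hyfdef
  have hyfun : ∀ x, (∃ y, P x y) → P x (yfun x) := by
    intro x h
    simp only [hyfdef, dif_pos h]
    exact h.choose_spec
  -- transfinite iteration
  set step : Set X → X := fun Q =>
    if h : ∃ s, IsLUB (insert b (yfun '' Q)) s then h.choose else b with hstepdef
  set c : Ordinal → X := ordSeqAux step with hcdef
  have hc : ∀ o, c o = step {x | ∃ β, ∃ _ : β < o, c β = x} := fun o => ordSeqAux_eq step o
  set S : Ordinal → Set X := fun o => insert b (yfun '' {x | ∃ β, ∃ _ : β < o, c β = x})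
    with hSdef
  -- main invariant, by transfinite induction
  have main : ∀ o, IsLUB (S o) (c o) ∧ P (c o) (yfun (c o)) := by
    intro o
    induction o using Ordinal.induction with
    | h o ih =>
      -- S o is a chain
      have hmemS : ∀ β, β < o → yfun (c β) ∈ S o := by
        intro β hβ
        exact Set.mem_insert_iff.2 (Or.inr ⟨c β, ⟨β, hβ, rfl⟩, rfl⟩)
      have hcomp : ∀ β γ, β < γ → γ < o → yfun (c β) ≤ c γ := by
        intro β γ hβγ hγ
        exact (ih γ hγ).1.1 (Set.mem_insert_iff.2 (Or.inr ⟨c β, ⟨β, hβγ, rfl⟩, rfl⟩))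
      have hchain : IsChain (· ≤ ·) (S o) := by
        intro x hx y hy _
        rcases Set.mem_insert_iff.1 hx with rfl | ⟨u, ⟨β, hβ, rfl⟩, rfl⟩
        · exact Or.inl (hb y)
        rcases Set.mem_insert_iff.1 hy with rfl | ⟨w, ⟨γ, hγ, rfl⟩, rfl⟩
        · exact Or.inr (hb _)
        rcases lt_trichotomy β γ with h | rfl | h
        · exact Or.inl (le_trans (hcomp β γ h hγ) (ih γ hγ).2.2.1)
        · exact Or.inl le_rfl
        · exact Or.inr (le_trans (hcomp γ β h hβ) (ih β hβ).2.2.1)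
      obtain hex := hcc (S o) ⟨b, Set.mem_insert _ _⟩ hchain
      have hlub : IsLUB (S o) (c o) := by
        rw [hc o]
        simp only [hstepdef]
        rw [dif_pos hex]
        exact hex.choose_spec
      -- c o is below g v for every v ∈ B
      have hle_g : ∀ v ∈ B, c o ≤ g v := by
        intro v hv
        refine hlub.2 ?_
        intro x hx
        rcases Set.mem_insert_iff.1 hx with rfl | ⟨u, ⟨β, hβ, rfl⟩, rfl⟩
        · exact hb _
        · exact (ih β hβ).2.2.2 v hv
      -- existence of a next element
      have E : ∃ y, P (c o) y := by
        by_cases hcase1 : ∃ β, ∃ _ : β < o, ¬c β < c o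
        · obtain ⟨β, hβ, hnlt⟩ := hcase1
          have h1 : c β ≤ c o := le_trans (ih β hβ).2.2.1 (hlub.1 (hmemS β hβ))
          have h2 : c β = c o := h1.eq_of_not_lt hnlt
          have h3 : yfun (c β) = c o :=
            le_antisymm (hlub.1 (hmemS β hβ)) (h2 ▸ (ih β hβ).2.2.1)
          refine ⟨yfun (c β), ?_, h3.ge, (ih β hβ).2.2.2⟩
          rw [← h2]; exact (ih β hβ).2.1
        · push_neg at hcase1
          by_cases hcase2 : ∃ v ∈ B, ¬c o < v
          · obtain ⟨v, hv, hnlt⟩ := hcase2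
            have h1 : c o ≤ v := le_trans (hle_g v hv) (hgle v hv)
            have h2 : c o = v := h1.eq_of_not_lt hnlt
            have h3 : g v = c o := le_antisymm (h2 ▸ hgle v hv) (hle_g v hv)
            refine ⟨c o, ?_, le_rfl, hle_g⟩
            have h4 := hgF v hv
            rw [h3, ← h2] at h4
            exact h4
          · push_neg at hcase2
            obtain ⟨y, hyF, hyU, hyV⟩ :=
              hF {x | ∃ β, ∃ _ : β < o, c β = x} B
                (by
                  intro x hx y hy _
                  obtain ⟨β, hβ, rfl⟩ := hx
                  obtain ⟨γ, hγ, rfl⟩ := hy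
                  rcases lt_trichotomy β γ with h | rfl | h
                  · exact Or.inl (le_trans (ih β hβ).2.2.1 (hcomp β γ h hγ))
                  · exact Or.inl le_rfl
                  · exact Or.inr (le_trans (ih γ hγ).2.2.1 (hcomp γ β h hβ)))
                yfun g
                (by rintro u ⟨β, hβ, rfl⟩; exact (ih β hβ).2.1)
                (fun v hv => hgF v hv)
                (by rintro u ⟨β, hβ, rfl⟩ v hv; exact (ih β hβ).2.2.2 v hv)
                (c o)
                (by rintro u ⟨β, hβ, rfl⟩; exact hcase1 β hβ)
                hcase2
            refine ⟨y, hyF, ?_, hyV⟩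
            refine hlub.2 ?_
            intro x hx
            rcases Set.mem_insert_iff.1 hx with rfl | ⟨u, ⟨β, hβ, rfl⟩, rfl⟩
            · exact hb _
            · exact hyU (c β) ⟨β, hβ, rfl⟩
      exact ⟨hlub, hyfun _ E⟩
  -- termination: some stage is a fixed point
  have hfix : ∃ o, yfun (c o) = c o := by
    by_contra hno
    push_neg at hno
    have hmono : StrictMono c := by
      intro o o' h
      have h1 : c o < yfun (c o) :=
        lt_of_le_of_ne (main o).2.2.1 (Ne.symm (hno o))
      have h2 : yfun (c o) ≤ c o' :=
        (main o').1.1 (Set.mem_insert_iff.2 (Or.inr ⟨c o, ⟨o, h, rfl⟩, rfl⟩))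
      exact lt_of_lt_of_le h1 h2
    exact not_injective_of_ordinal c hmono.injective
  obtain ⟨o, ho⟩ := hfix
  intro v hv
  have hvB : v ∈ B := hv
  have hP := (main o).2
  refine ⟨c o, ⟨?_, ?_⟩, ?_⟩
  · have h1 := hP.1
    rw [ho] at h1
    exact h1
  · intro z hz
    have hzB : z ∈ B := ⟨z, hz, le_rfl⟩
    have := hP.2.2 z hzB
    rw [ho, hgFix z hz] at this
    exact this
  · have := hP.2.2 v hvB
    rw [ho] at this
    exact le_trans this (hgle v hvB)
end

section
/- Let X be a lattice and let F : X → 2^X be a V-ascending correspondence such that every value F(x) is nonempty and subcomplete in X (for every nonempty subset T ⊆ F(x), both sup_X T and inf_X T exist and belong to F(x)). Then for any subsets U and V of X, any selections f : U → X and g : V → X of F satisfying f(u) ≤ g(v) for all u ∈ U and v ∈ V, and every x ∈ X with u < x for all u ∈ U and x < v for all v ∈ V, there exists y ∈ F(x) with f(u) ≤ y for all u ∈ U and y ≤ g(v) for all v ∈ V. -/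
/-- Remark 6.3(1): a V-ascending correspondence on a lattice with nonempty subcomplete
values satisfies the interpolation condition on selections. -/
theorem vAscending_subcomplete_interpolation
    {X : Type*} [Lattice X] (F : X → Set X)
    (hlow : ∀ x x' : X, x < x' → ∀ y ∈ F x, ∀ y' ∈ F x', y ⊓ y' ∈ F x)
    (hupp : ∀ x x' : X, x < x' → ∀ y ∈ F x, ∀ y' ∈ F x', y ⊔ y' ∈ F x')
    (hne : ∀ x : X, (F x).Nonempty)
    (hsub : ∀ x : X, ∀ T ⊆ F x, T.Nonempty →
      (∃ s, IsLUB T s ∧ s ∈ F x) ∧ (∃ i, IsGLB T i ∧ i ∈ F x)) :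
    ∀ U V : Set X, ∀ f g : X → X,
      (∀ u ∈ U, f u ∈ F u) → (∀ v ∈ V, g v ∈ F v) →
      (∀ u ∈ U, ∀ v ∈ V, f u ≤ g v) →
      ∀ x : X, (∀ u ∈ U, u < x) → (∀ v ∈ V, x < v) →
      ∃ y ∈ F x, (∀ u ∈ U, f u ≤ y) ∧ ∀ v ∈ V, y ≤ g v := by
  intro U V f g hf hg hfg x hU hV
  obtain ⟨z, hz⟩ := hne x
  -- T = {z} ∪ { f u ⊔ z | u ∈ U } ⊆ F x
  set T : Set X := insert z ((fun u => f u ⊔ z) '' U) with hT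
  have hTsub : T ⊆ F x := by
    rintro t (rfl | ⟨u, hu, rfl⟩)
    · exact hz
    · exact hupp u x (hU u hu) (f u) (hf u hu) z hz
  obtain ⟨⟨s, hs, hsF⟩, -⟩ := hsub x T hTsub ⟨z, Set.mem_insert _ _⟩
  have hsge : ∀ u ∈ U, f u ≤ s := fun u hu =>
    le_trans le_sup_left (hs.1 (Set.mem_insert_of_mem _ ⟨u, hu, rfl⟩))
  -- T' = {s} ∪ { s ⊓ g v | v ∈ V } ⊆ F x
  set T' : Set X := insert s ((fun v => s ⊓ g v) '' V) with hT'
  have hT'sub : T' ⊆ F x := by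
    rintro t (rfl | ⟨v, hv, rfl⟩)
    · exact hsF
    · exact hlow x v (hV v hv) s hsF (g v) (hg v hv)
  obtain ⟨-, ⟨y, hy, hyF⟩⟩ := hsub x T' hT'sub ⟨s, Set.mem_insert _ _⟩
  refine ⟨y, hyF, fun u hu => ?_, fun v hv => ?_⟩
  · refine hy.2 ?_
    rintro t (rfl | ⟨v, hv, rfl⟩)
    · exact hsge u hu
    · exact le_inf (hsge u hu) (hfg u hu v hv)
  · exact le_trans (hy.1 (Set.mem_insert_of_mem _ ⟨v, hv, rfl⟩)) inf_le_right
end
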